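/- arXiv:2506.10222 — 9 statements merged into one kernel-verified Lean document; each statement's English description precedes it below -/
import Mathlib

section
/- Suppose S' is a child of S in the ordinarization tree T_g. Then (1) every effective generator of S' is an effective generator of S, i.e. eg(S') ⊆ eg(S); (2) the Frobenius number F(S') is an element of eg(S) \ eg(S'). Consequently h(S) > h(S'). -/
/-- A numerical semigroup: a subset of ℕ containing 0, closed under addition,
with finite complement. -/
def IsNumericalSemigroup (S : Set ℕ) : Prop :=
  0 ∈ S ∧ (∀ a ∈ S, ∀ b ∈ S, a + b ∈ S) ∧ Sᶜ.Finite

/-- The genus: the number of gaps. -/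
noncomputable def genus (S : Set ℕ) : ℕ := Sᶜ.ncard

/-- The Frobenius number: the largest gap. -/
noncomputable def frob (S : Set ℕ) : ℕ := sSup Sᶜ

/-- The multiplicity: the smallest nonzero element. -/
noncomputable def mult (S : Set ℕ) : ℕ := sInf (S \ {0})

/-- The ordinary numerical semigroup of genus `g`: `{0, g+1, g+2, ...}`. -/
def ordinary (g : ℕ) : Set ℕ := {0} ∪ {n | g + 1 ≤ n}

/-- The ordinarization transform `S ∪ {F(S)} \ {m(S)}`. -/
noncomputable def transform (S : Set ℕ) : Set ℕ := (S ∪ {frob S}) \ {mult S}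

/-- A minimal generator: a nonzero element of `S` that is not a sum of two
nonzero elements of `S`. -/
def IsMinGen (S : Set ℕ) (m : ℕ) : Prop :=
  m ∈ S ∧ m ≠ 0 ∧ ¬ ∃ u ∈ S, ∃ v ∈ S, u ≠ 0 ∧ v ≠ 0 ∧ u + v = m

/-- The set of effective generators: minimal generators larger than the
Frobenius number. -/
noncomputable def eg (S : Set ℕ) : Set ℕ := {m | IsMinGen S m ∧ frob S < m}

/-- The number of effective generators. -/
noncomputable def hEff (S : Set ℕ) : ℕ := (eg S).ncard

/-- `S'` is a child of `S` in the ordinarization tree: `S'` is a numerical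
semigroup, not the ordinary semigroup of its genus, and its ordinarization
transform is `S`. -/
def IsChild (S' S : Set ℕ) : Prop :=
  IsNumericalSemigroup S' ∧ S' ≠ ordinary (genus S') ∧ transform S' = S

/-!
Write `m < F` for the multiplicity and the Frobenius number of `S'` (`m < F` because `S'` is
not ordinary), so that `S = S' ∪ {F} \ {m}` has all its gaps below `F` and all its nonzero
elements above `m`. A decomposition in `S` of an effective generator `x` of `S'` must use `F`,
say `x = u + F`; but then `x = m + (u + F - m)` already decomposes `x` in `S'`. And `F` is a
minimal generator of `S`: both summands of a decomposition would lie strictly between `m` and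
`F`, hence in `S'`, and so would their sum `F`.
-/

section NumericalSemigroup

variable {S : Set ℕ}

lemma mem_of_frob_lt (h : Sᶜ.Finite) {n : ℕ} (hn : frob S < n) : n ∈ S :=
  not_not.mp fun hc => hn.not_ge (le_csSup h.bddAbove hc)

lemma frob_notMem (h : Sᶜ.Finite) (hF : frob S ≠ 0) : frob S ∉ S := by
  have hne : Sᶜ.Nonempty := by
    refine Set.nonempty_iff_ne_empty.mpr fun he => hF ?_
    rw [frob, he, csSup_empty]
    rfl
  exact Nat.sSup_mem hne h.bddAbove

lemma mult_mem (h : Sᶜ.Finite) : mult S ∈ S ∧ mult S ≠ 0 :=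
  Nat.sInf_mem ((Set.infinite_of_finite_compl h).sdiff (Set.finite_singleton 0)).nonempty

lemma mult_le {n : ℕ} (hn : n ∈ S) (h0 : n ≠ 0) : mult S ≤ n :=
  Nat.sInf_le ⟨hn, h0⟩

lemma eq_ordinary_of_frob_le_mult (hS : IsNumericalSemigroup S) (h : frob S ≤ mult S) :
    S = ordinary (genus S) := by
  have hmem : ∀ n, n ∈ S ↔ n = 0 ∨ mult S ≤ n := by
    intro n
    refine ⟨fun hn => (eq_or_ne n 0).imp_right (mult_le hn), ?_⟩
    rintro (rfl | hle)
    · exact hS.1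
    · rcases hle.eq_or_lt with rfl | hlt
      · exact (mult_mem hS.2.2).1
      · exact mem_of_frob_lt hS.2.2 (h.trans_lt hlt)
  have hcompl : Sᶜ = Set.Ioo 0 (mult S) := by
    ext n
    simp only [Set.mem_compl_iff, hmem, Set.mem_Ioo]
    omega
  have hgenus : genus S = mult S - 1 := by
    rw [genus, hcompl, ← Finset.coe_Ioo, Set.ncard_coe_finset, Nat.card_Ioo, Nat.sub_zero]
  have hm0 := (mult_mem hS.2.2).2
  ext n
  simp only [hmem, hgenus, ordinary, Set.mem_union, Set.mem_singleton_iff, Set.mem_ofPred_eq]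
  omega

lemma mult_lt_frob (hS : IsNumericalSemigroup S) (hne : S ≠ ordinary (genus S)) :
    mult S < frob S :=
  lt_of_not_ge fun h => hne (eq_ordinary_of_frob_le_mult hS h)

lemma eg_finite (h : Sᶜ.Finite) : (eg S).Finite := by
  refine (Set.finite_Iic (2 * frob S + 1)).subset ?_
  rintro x ⟨⟨-, -, hx⟩, -⟩
  by_contra hc
  rw [Set.mem_Iic, not_le] at hc
  exact hx ⟨frob S + 1, mem_of_frob_lt h (by omega), x - frob S - 1,
    mem_of_frob_lt h (by omega), by omega, by omega, by omega⟩

end NumericalSemigroup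

section Transform

variable {S : Set ℕ}

lemma mem_transform_iff {n : ℕ} :
    n ∈ transform S ↔ (n ∈ S ∨ n = frob S) ∧ n ≠ mult S := by
  simp only [transform, Set.mem_sdiff, Set.mem_union, Set.mem_singleton_iff]

lemma compl_transform_finite (h : Sᶜ.Finite) : (transform S)ᶜ.Finite := by
  refine (h.insert (mult S)).subset fun n hn => ?_
  rw [Set.mem_compl_iff, mem_transform_iff] at hn
  rw [Set.mem_insert_iff, Set.mem_compl_iff]
  tauto

lemma mult_lt_of_mem_transform (hm : mult S < frob S) {u : ℕ} (hu : u ∈ transform S)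
    (hu0 : u ≠ 0) : mult S < u := by
  obtain ⟨hu | rfl, hum⟩ := mem_transform_iff.mp hu
  · exact (mult_le hu hu0).lt_of_ne' hum
  · exact hm

lemma frob_transform_lt (h : Sᶜ.Finite) (hm : mult S < frob S) :
    frob (transform S) < frob S := by
  have hbound : ∀ n ∈ (transform S)ᶜ, n ≤ frob S - 1 := by
    intro n hn
    rw [Set.mem_compl_iff, mem_transform_iff] at hn
    by_cases hnm : n = mult S
    · omega
    · have hnS : n ∉ S ∧ n ≠ frob S := by tauto
      have : n ≤ frob S := le_csSup h.bddAbove hnS.1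
      omega
  have : frob (transform S) ≤ frob S - 1 := csSup_le' hbound
  omega

lemma not_isMinGen_add_frob (h : Sᶜ.Finite) {u : ℕ} (hu : mult S < u) :
    ¬ IsMinGen S (u + frob S) :=
  fun ⟨_, _, hmin⟩ => hmin ⟨mult S, (mult_mem h).1, u + frob S - mult S,
    mem_of_frob_lt h (by omega), (mult_mem h).2, by omega, by omega⟩

lemma isMinGen_transform (h : Sᶜ.Finite) (hm : mult S < frob S) {x : ℕ} (hx : IsMinGen S x)
    (hxF : frob S < x) :
    IsMinGen (transform S) x := by
  obtain ⟨hxS, hx0, hxmin⟩ := hx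
  refine ⟨mem_transform_iff.mpr ⟨Or.inl hxS, by omega⟩, hx0, ?_⟩
  rintro ⟨u, hu, v, hv, hu0, hv0, rfl⟩
  rcases (mem_transform_iff.mp hu).1 with huS | rfl
  · rcases (mem_transform_iff.mp hv).1 with hvS | rfl
    · exact hxmin ⟨u, huS, v, hvS, hu0, hv0, rfl⟩
    · exact not_isMinGen_add_frob h (mult_lt_of_mem_transform hm hu hu0)
        ⟨hxS, hx0, hxmin⟩
  · rw [add_comm] at hxS hxmin
    exact not_isMinGen_add_frob h (mult_lt_of_mem_transform hm hv hv0)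
      ⟨hxS, by omega, hxmin⟩

lemma eg_subset_eg_transform (h : Sᶜ.Finite) (hm : mult S < frob S) :
    eg S ⊆ eg (transform S) :=
  fun _ ⟨hx, hxF⟩ => ⟨isMinGen_transform h hm hx hxF, (frob_transform_lt h hm).trans hxF⟩

lemma frob_mem_eg_transform (hS : IsNumericalSemigroup S) (hm : mult S < frob S) :
    frob S ∈ eg (transform S) := by
  refine ⟨⟨mem_transform_iff.mpr ⟨Or.inr rfl, hm.ne'⟩, by omega, ?_⟩,
    frob_transform_lt hS.2.2 hm⟩
  rintro ⟨u, hu, v, hv, hu0, hv0, huv⟩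
  have hum := mult_lt_of_mem_transform hm hu hu0
  have hvm := mult_lt_of_mem_transform hm hv hv0
  have huS : u ∈ S := (mem_transform_iff.mp hu).1.resolve_right (by omega)
  have hvS : v ∈ S := (mem_transform_iff.mp hv).1.resolve_right (by omega)
  exact frob_notMem hS.2.2 (by omega) (huv ▸ hS.2.1 u huS v hvS)

end Transform

theorem stmt_0_general (S S' : Set ℕ)
    (hchild : IsChild S' S) :
    eg S' ⊆ eg S ∧ frob S' ∈ eg S \ eg S' ∧ hEff S' < hEff S := by
  obtain ⟨hS', hne, rfl⟩ := hchild
  have hm := mult_lt_frob hS' hne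
  have hsub := eg_subset_eg_transform hS'.2.2 hm
  have hF : frob S' ∈ eg (transform S') \ eg S' :=
    ⟨frob_mem_eg_transform hS' hm, fun h => frob_notMem hS'.2.2 (by omega) h.1.1⟩
  exact ⟨hsub, hF, Set.ncard_lt_ncard ⟨hsub, fun h => hF.2 (h hF.1)⟩
    (eg_finite (compl_transform_finite hS'.2.2))⟩

theorem stmt_0 (g : ℕ) (S S' : Set ℕ)
    (hS : IsNumericalSemigroup S) (hgS : genus S = g) (hgS' : genus S' = g)
    (hchild : IsChild S' S) :
    eg S' ⊆ eg S ∧ frob S' ∈ eg S \ eg S' ∧ hEff S' < hEff S :=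
  stmt_0_general S S' hchild
end

section
/- There exist infinitely many numerical semigroups S such that h(S) = 4 and S has at least one child in the ordinarization tree T_{g(S)}. -/
/-!
For `t ≥ 3`, the semigroup `⟨3⟩ ∪ [3t+3, ∞)` has Frobenius number `3t+2` and multiplicity `3`;
its ordinarization transform is `S_t = {0, 6, 9, …, 3t} ∪ [3t+2, ∞)`, with Frobenius number `3t+1`.
Every element of `S_t` above `3t+1` other than `3t+2, 3t+4, 3t+5, 3t+7` is `6` plus an element
of `S_t`, so `h(S_t) = 4`; distinct `t` give distinct Frobenius numbers, hence distinct `S_t`.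
-/

lemma isNumericalSemigroup_of_forall_le_mem {S : Set ℕ} (h0 : 0 ∈ S)
    (hadd : ∀ a ∈ S, ∀ b ∈ S, a + b ∈ S) {c : ℕ} (hc : ∀ n, c ≤ n → n ∈ S) :
    IsNumericalSemigroup S :=
  ⟨h0, hadd, (Set.finite_Iio c).subset fun n hn => not_le.mp fun h => hn (hc n h)⟩

lemma frob_eq_of_notMem {S : Set ℕ} {f : ℕ} (hf : f ∉ S) (hlt : ∀ n, f < n → n ∈ S) :
    frob S = f :=
  IsGreatest.csSup_eq ⟨hf, fun n hn => not_lt.mp fun h => hn (hlt n h)⟩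

lemma mult_eq_of_mem {S : Set ℕ} {m : ℕ} (hm : m ∈ S) (hm0 : m ≠ 0)
    (hlt : ∀ n, n ≠ 0 → n < m → n ∉ S) : mult S = m :=
  IsLeast.csInf_eq ⟨⟨hm, hm0⟩, fun n ⟨hn, hn0⟩ => not_lt.mp fun h => hlt n hn0 h hn⟩

lemma ne_ordinary_of_mem_of_succ_notMem {S : Set ℕ} {a : ℕ} (ha0 : a ≠ 0) (ha : a ∈ S)
    (ha1 : a + 1 ∉ S) (g : ℕ) : S ≠ ordinary g := by
  rintro rfl
  simp only [ordinary, Set.mem_union, Set.mem_singleton_iff, Set.mem_ofPred_eq] at ha ha1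
  omega

def threeTail (t : ℕ) : Set ℕ := {n | 3 ∣ n ∨ 3 * t + 3 ≤ n}

def threeTailParent (t : ℕ) : Set ℕ :=
  {n | n = 0 ∨ (3 ∣ n ∧ 6 ≤ n ∧ n ≤ 3 * t) ∨ 3 * t + 2 ≤ n}

lemma mem_threeTail {t n : ℕ} : n ∈ threeTail t ↔ 3 ∣ n ∨ 3 * t + 3 ≤ n := Iff.rfl

lemma mem_threeTailParent {t n : ℕ} :
    n ∈ threeTailParent t ↔ n = 0 ∨ (3 ∣ n ∧ 6 ≤ n ∧ n ≤ 3 * t) ∨ 3 * t + 2 ≤ n := Iff.rfl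

lemma isNumericalSemigroup_threeTail (t : ℕ) : IsNumericalSemigroup (threeTail t) :=
  isNumericalSemigroup_of_forall_le_mem (Or.inl (dvd_zero 3))
    (fun a ha b hb => by rw [mem_threeTail] at *; omega) (fun _ => Or.inr)

lemma isNumericalSemigroup_threeTailParent (t : ℕ) :
    IsNumericalSemigroup (threeTailParent t) :=
  isNumericalSemigroup_of_forall_le_mem (Or.inl rfl)
    (fun a ha b hb => by rw [mem_threeTailParent] at *; omega) (fun _ h => Or.inr (Or.inr h))

lemma frob_threeTail (t : ℕ) : frob (threeTail t) = 3 * t + 2 :=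
  frob_eq_of_notMem (by rw [mem_threeTail]; omega) fun n h => by rw [mem_threeTail]; omega

lemma frob_threeTailParent (t : ℕ) : frob (threeTailParent t) = 3 * t + 1 :=
  frob_eq_of_notMem (by rw [mem_threeTailParent]; omega)
    fun n h => by rw [mem_threeTailParent]; omega

lemma mult_threeTail (t : ℕ) : mult (threeTail t) = 3 :=
  mult_eq_of_mem (by rw [mem_threeTail]; omega) (by norm_num)
    fun n hn0 h => by rw [mem_threeTail]; omega

lemma transform_threeTail {t : ℕ} (ht : 0 < t) : transform (threeTail t) = threeTailParent t := by
  ext n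
  simp only [transform, frob_threeTail, mult_threeTail, Set.mem_sdiff, Set.mem_union,
    Set.mem_singleton_iff, mem_threeTail, mem_threeTailParent]
  omega

lemma isChild_threeTail {t : ℕ} (ht : 0 < t) : IsChild (threeTail t) (threeTailParent t) :=
  ⟨isNumericalSemigroup_threeTail t,
    ne_ordinary_of_mem_of_succ_notMem (a := 3) (by norm_num) (by rw [mem_threeTail]; omega)
      (by rw [mem_threeTail]; omega) _,
    transform_threeTail ht⟩

lemma eg_threeTailParent {t : ℕ} (ht : 3 ≤ t) :
    eg (threeTailParent t) = {3 * t + 2, 3 * t + 4, 3 * t + 5, 3 * t + 7} := by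
  ext m
  simp only [eg, IsMinGen, Set.mem_ofPred_eq, frob_threeTailParent, Set.mem_insert_iff,
    Set.mem_singleton_iff, mem_threeTailParent]
  constructor
  · rintro ⟨⟨hm, -, hirred⟩, hfrob⟩
    by_contra! hother
    exact hirred ⟨6, by omega, m - 6, by omega, by omega, by omega, by omega⟩
  · intro hm
    refine ⟨⟨by omega, by omega, ?_⟩, by omega⟩
    rintro ⟨u, hu, v, hv, hu0, hv0, huv⟩
    omega

lemma hEff_threeTailParent {t : ℕ} (ht : 3 ≤ t) : hEff (threeTailParent t) = 4 := by
  rw [hEff, eg_threeTailParent ht,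
    Set.ncard_insert_of_notMem (by simp only [Set.mem_insert_iff, Set.mem_singleton_iff]; omega),
    Set.ncard_insert_of_notMem (by simp only [Set.mem_insert_iff, Set.mem_singleton_iff]; omega),
    Set.ncard_pair (by omega)]

theorem stmt_4 :
    {S : Set ℕ | IsNumericalSemigroup S ∧ hEff S = 4 ∧
      ∃ S' : Set ℕ, IsChild S' S}.Infinite := by
  refine Set.infinite_of_injective_forall_mem (f := fun k => threeTailParent (k + 3)) ?_ ?_
  · intro a b hab
    have hfrob := congrArg frob hab
    simp only [frob_threeTailParent] at hfrob
    omega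
  · intro k
    exact ⟨isNumericalSemigroup_threeTailParent _, hEff_threeTailParent (by omega),
      threeTail (k + 3), isChild_threeTail (by omega)⟩
end

section
/- For every nonnegative integer g, the number of numerical semigroups of genus g and ordinarization number 1 is n_{g,1} = (3/8)g² − (1/4)g if g is even, and n_{g,1} = (3/8)g² − 3/8 if g is odd. -/
/-- The ordinarization number: `r(S) = #(S ∩ {1, ..., g(S)})`. -/
noncomputable def ordNum (S : Set ℕ) : ℕ := (S ∩ Set.Icc 1 (genus S)).ncard

/-- `nGR g r` is the number of numerical semigroups of genus `g` with
ordinarization number `r`. -/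
noncomputable def nGR (g r : ℕ) : ℕ :=
  {S : Set ℕ | IsNumericalSemigroup S ∧ genus S = g ∧ ordNum S = r}.ncard

/-!
If `S` has genus `g` and `S ∩ [1, g] = {x}`, then `S` has `g - 1` gaps in `[1, g]` and hence exactly
one gap `y > g`, so `S = {0, x} ∪ ([g + 1, ∞) \ {y})`. Such a set is closed under addition exactly
when `2x > g`, `y ≠ 2x` and `y ≤ x + g` (otherwise `y = x + (y - x)` with `y - x ∈ S`). For each
`x ∈ (g/2, g]` this leaves `x - 1` choices of `y`, and summing `x - 1` over that range gives the
two quadratic formulas.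
-/

open Finset

def ordNumOneSemigroup (g x y : ℕ) : Set ℕ := {0, x} ∪ (Set.Ici (g + 1) \ {y})

def ordNumOneParams (g : ℕ) : Finset (Σ _ : ℕ, ℕ) :=
  (Ioc (g / 2) g).sigma fun x => (Icc (g + 1) (x + g)).erase (2 * x)

section ordNumOneSemigroup

variable {g x y : ℕ}

lemma mem_ordNumOneSemigroup {n : ℕ} :
    n ∈ ordNumOneSemigroup g x y ↔ n = 0 ∨ n = x ∨ (g + 1 ≤ n ∧ n ≠ y) := by
  simp [ordNumOneSemigroup, or_assoc]

lemma compl_ordNumOneSemigroup (hxg : x ≤ g) (hy : g + 1 ≤ y) :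
    (ordNumOneSemigroup g x y)ᶜ = ↑(insert y ((Icc 1 g).erase x)) := by
  ext n
  simp only [Set.mem_compl_iff, mem_ordNumOneSemigroup, coe_insert, coe_erase, coe_Icc,
    Set.mem_insert_iff, Set.mem_sdiff, Set.mem_Icc, Set.mem_singleton_iff]
  omega

lemma genus_ordNumOneSemigroup (hx : 1 ≤ x) (hxg : x ≤ g) (hy : g + 1 ≤ y) :
    genus (ordNumOneSemigroup g x y) = g := by
  rw [genus, compl_ordNumOneSemigroup hxg hy, Set.ncard_coe_finset,
    card_insert_of_notMem (by simp only [mem_erase, mem_Icc]; omega),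
    card_erase_of_mem (by simp only [mem_Icc]; omega), Nat.card_Icc]
  omega

lemma ordNum_ordNumOneSemigroup (hx : 1 ≤ x) (hxg : x ≤ g) (hy : g + 1 ≤ y) :
    ordNum (ordNumOneSemigroup g x y) = 1 := by
  have : ordNumOneSemigroup g x y ∩ Set.Icc 1 g = {x} := by
    ext n
    simp only [Set.mem_inter_iff, mem_ordNumOneSemigroup, Set.mem_Icc, Set.mem_singleton_iff]
    omega
  rw [ordNum, genus_ordNumOneSemigroup hx hxg hy, this, Set.ncard_singleton]

lemma isNumericalSemigroup_ordNumOneSemigroup_iff (hx : 1 ≤ x) (hxg : x ≤ g)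
    (hy : g + 1 ≤ y) :
    IsNumericalSemigroup (ordNumOneSemigroup g x y) ↔ g + 1 ≤ 2 * x ∧ y ≤ x + g ∧ y ≠ 2 * x := by
  constructor
  · rintro ⟨-, hadd, -⟩
    have hx' : x ∈ ordNumOneSemigroup g x y := mem_ordNumOneSemigroup.2 (by omega)
    have hxx := mem_ordNumOneSemigroup.1 (hadd x hx' x hx')
    refine ⟨by omega, ?_, by omega⟩
    by_contra! hlt
    have hyx : y - x ∈ ordNumOneSemigroup g x y := mem_ordNumOneSemigroup.2 (by omega)
    have := mem_ordNumOneSemigroup.1 (hadd x hx' (y - x) hyx)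
    omega
  · rintro ⟨h2x, hyx, hy2x⟩
    refine ⟨mem_ordNumOneSemigroup.2 (Or.inl rfl), fun a ha b hb => ?_, ?_⟩
    · rw [mem_ordNumOneSemigroup] at ha hb ⊢
      omega
    · rw [compl_ordNumOneSemigroup hxg hy]
      exact finite_toSet _

end ordNumOneSemigroup

lemma eq_ordNumOneSemigroup_of_inter_eq_singleton {S : Set ℕ} {g x y : ℕ} (h0 : 0 ∈ S)
    (hx : S ∩ Set.Icc 1 g = {x}) (hy : Sᶜ ∩ Set.Ici (g + 1) = {y}) :
    S = ordNumOneSemigroup g x y := by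
  ext n
  have hxn := Set.ext_iff.1 hx n
  have hyn := Set.ext_iff.1 hy n
  simp only [Set.mem_inter_iff, Set.mem_compl_iff, Set.mem_Icc, Set.mem_Ici,
    Set.mem_singleton_iff] at hxn hyn
  rw [mem_ordNumOneSemigroup]
  by_cases hn : n ∈ S
  · have : n ≠ y := fun h => (hyn.2 h).1 hn
    have : n = 0 ∨ n = x ∨ g + 1 ≤ n := by
      by_contra! h
      exact h.2.1 (hxn.1 ⟨hn, by omega, by omega⟩)
    tauto
  · have : n ≠ 0 := fun h => hn (h ▸ h0)
    have : n ≠ x := fun h => hn (hxn.2 h).1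
    have : g + 1 ≤ n → n = y := fun h => hyn.1 ⟨hn, h⟩
    tauto

lemma ncard_compl_inter_Ici_eq_one {S : Set ℕ} {g x : ℕ} (h0 : 0 ∈ S) (hfin : Sᶜ.Finite)
    (hg : genus S = g) (hx : S ∩ Set.Icc 1 g = {x}) :
    (Sᶜ ∩ Set.Ici (g + 1)).ncard = 1 := by
  have hxg : x ∈ S ∩ Set.Icc 1 g := hx ▸ Set.mem_singleton x
  have hsmall : Sᶜ ∩ Set.Icc 1 g = ↑((Icc 1 g).erase x) := by
    ext n
    have hxn := Set.ext_iff.1 hx n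
    simp only [Set.mem_inter_iff, Set.mem_Icc, Set.mem_singleton_iff] at hxn
    simp only [Set.mem_inter_iff, Set.mem_compl_iff, Set.mem_Icc, coe_erase, coe_Icc,
      Set.mem_sdiff, Set.mem_singleton_iff]
    tauto
  have hlarge : Sᶜ \ Set.Icc 1 g = Sᶜ ∩ Set.Ici (g + 1) := by
    ext n
    simp only [Set.mem_sdiff, Set.mem_compl_iff, Set.mem_Icc, Set.mem_inter_iff, Set.mem_Ici]
    constructor <;> rintro ⟨hn, h⟩ <;> refine ⟨hn, ?_⟩
    · have : n ≠ 0 := fun h => hn (h ▸ h0)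
      omega
    · omega
  have hsplit := Set.ncard_inter_add_ncard_sdiff_eq_ncard Sᶜ (Set.Icc 1 g) hfin
  rw [hsmall, hlarge, Set.ncard_coe_finset, card_erase_of_mem (by simpa using hxg.2),
    Nat.card_Icc, ← genus, hg] at hsplit
  have : 1 ≤ x ∧ x ≤ g := hxg.2
  omega

lemma exists_eq_ordNumOneSemigroup {S : Set ℕ} {g : ℕ} (hS : IsNumericalSemigroup S)
    (hg : genus S = g) (hr : ordNum S = 1) :
    ∃ x y, 1 ≤ x ∧ x ≤ g ∧ g + 1 ≤ y ∧ S = ordNumOneSemigroup g x y := by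
  rw [ordNum, hg] at hr
  obtain ⟨x, hx⟩ := Set.ncard_eq_one.1 hr
  obtain ⟨y, hy⟩ := Set.ncard_eq_one.1 (ncard_compl_inter_Ici_eq_one hS.1 hS.2.2 hg hx)
  have hxg : x ∈ S ∩ Set.Icc 1 g := hx ▸ Set.mem_singleton x
  have hyg : y ∈ Sᶜ ∩ Set.Ici (g + 1) := hy ▸ Set.mem_singleton y
  exact ⟨x, y, hxg.2.1, hxg.2.2, hyg.2, eq_ordNumOneSemigroup_of_inter_eq_singleton hS.1 hx hy⟩

lemma mem_ordNumOneParams {g x y : ℕ} :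
    ⟨x, y⟩ ∈ ordNumOneParams g ↔ g / 2 < x ∧ x ≤ g ∧ g + 1 ≤ y ∧ y ≤ x + g ∧ y ≠ 2 * x := by
  simp only [ordNumOneParams, mem_sigma, mem_Ioc, mem_erase, mem_Icc]
  tauto

lemma setOf_ordNum_eq_one (g : ℕ) :
    {S : Set ℕ | IsNumericalSemigroup S ∧ genus S = g ∧ ordNum S = 1} =
      (fun p : Σ _ : ℕ, ℕ => ordNumOneSemigroup g p.1 p.2) '' ↑(ordNumOneParams g) := by
  ext S
  simp only [Set.mem_ofPred_eq, Set.mem_image, mem_coe]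
  constructor
  · rintro ⟨hS, hg, hr⟩
    obtain ⟨x, y, hx, hxg, hy, rfl⟩ := exists_eq_ordNumOneSemigroup hS hg hr
    have := (isNumericalSemigroup_ordNumOneSemigroup_iff hx hxg hy).1 hS
    exact ⟨⟨x, y⟩, mem_ordNumOneParams.2 (by omega), rfl⟩
  · rintro ⟨⟨x, y⟩, hp, rfl⟩
    obtain ⟨hx, hxg, hy, hyx, hy2x⟩ := mem_ordNumOneParams.1 hp
    have hx1 : 1 ≤ x := by omega
    exact ⟨(isNumericalSemigroup_ordNumOneSemigroup_iff hx1 hxg hy).2 ⟨by omega, hyx, hy2x⟩,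
      genus_ordNumOneSemigroup hx1 hxg hy, ordNum_ordNumOneSemigroup hx1 hxg hy⟩

lemma injOn_ordNumOneSemigroup (g : ℕ) :
    Set.InjOn (fun p : Σ _ : ℕ, ℕ => ordNumOneSemigroup g p.1 p.2) ↑(ordNumOneParams g) := by
  rintro ⟨x, y⟩ hp ⟨x', y'⟩ hp' h
  simp only [mem_coe, mem_ordNumOneParams] at hp hp'
  dsimp only at h
  have hx : x ∈ ordNumOneSemigroup g x' y' := h ▸ mem_ordNumOneSemigroup.2 (by omega)
  rw [mem_ordNumOneSemigroup] at hx
  obtain rfl : x = x' := by omega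
  obtain rfl : y = y' := by
    by_contra hne
    have hy : y' ∈ ordNumOneSemigroup g x y := mem_ordNumOneSemigroup.2 (by omega)
    rw [h, mem_ordNumOneSemigroup] at hy
    omega
  rfl

lemma card_ordNumOneParams (g : ℕ) :
    (ordNumOneParams g).card = ∑ x ∈ Ioc (g / 2) g, (x - 1) := by
  rw [ordNumOneParams, card_sigma]
  refine sum_congr rfl fun x hx => ?_
  rw [mem_Ioc] at hx
  rw [card_erase_of_mem (by rw [mem_Icc]; omega), Nat.card_Icc]
  omega

lemma nGR_one_eq_sum (g : ℕ) : nGR g 1 = ∑ x ∈ Ioc (g / 2) g, (x - 1) := by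
  rw [nGR, setOf_ordNum_eq_one, (injOn_ordNumOneSemigroup g).ncard_image,
    Set.ncard_coe_finset, card_ordNumOneParams]

lemma two_mul_sum_Ioc_cast_sub_one {R : Type*} [CommRing R] {a b : ℕ} (hab : a ≤ b) :
    2 * ∑ x ∈ Ioc a b, ((x : R) - 1) = b * (b - 1) - a * (a - 1) := by
  induction b, hab using Nat.le_induction with
  | base => simp
  | succ b hab ih =>
    rw [sum_Ioc_succ_top hab, mul_add, ih]
    push_cast
    ring

theorem stmt_8 (g : ℕ) :
    (nGR g 1 : ℚ) =
      if Even g then 3/8 * (g : ℚ)^2 - 1/4 * (g : ℚ)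
      else 3/8 * (g : ℚ)^2 - 3/8 := by
  have hcast : (nGR g 1 : ℚ) = ∑ x ∈ Ioc (g / 2) g, ((x : ℚ) - 1) := by
    rw [nGR_one_eq_sum, Nat.cast_sum]
    exact sum_congr rfl fun x hx => Nat.cast_pred (by rw [mem_Ioc] at hx; omega)
  have hsum := two_mul_sum_Ioc_cast_sub_one (R := ℚ) (Nat.div_le_self g 2)
  rw [hcast]
  rcases Nat.even_or_odd' g with ⟨m, rfl | rfl⟩
  · rw [if_pos (even_two_mul m)]
    rw [show 2 * m / 2 = m by omega] at hsum ⊢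
    push_cast at hsum ⊢
    linarith
  · rw [if_neg (Nat.not_even_two_mul_add_one m)]
    rw [show (2 * m + 1) / 2 = m by omega] at hsum ⊢
    push_cast at hsum ⊢
    linarith
end

section
/- Let S = ⟨a, b⟩ where 2 ≤ a < b and gcd(a, b) = 1, and write g = (ab − a − b + 1)/2. Then the ordinarization number r(S) is one less than the number of integer points (x, y) ∈ ℕ² satisfying ax + by ≤ g, i.e. r(S) = #{(x,y) ∈ ℕ² : ax + by ≤ g} − 1. -/
/-!
As long as `a * x + b * y < a * b`, the value determines `(x, y)` (reduce mod `b`), so the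
elements of `S` up to such a bound are counted by the lattice points under the line.
For the Frobenius number `F = a * b - a - b`, the point reflection
`(x, y) ↦ (b - 2 - x, a - 2 - y)` of the rectangle `[0, b - 2] × [0, a - 2]` exchanges the lattice
points below `F` with those above it, so exactly half of the `(a - 1) * (b - 1) = F + 1` integers
of `[0, F]` lie in `S`; since every gap is at most `F`, this gives `g(S) = g`. Finally,
`S ∩ [0, g]` is `S ∩ [1, g]` together with `0`.
-/

theorem ncard_inter_Icc_one_add_one {S : Set ℕ} (h0 : 0 ∈ S) (n : ℕ) :
    (S ∩ Set.Icc 1 n).ncard + 1 = (S ∩ Set.Iic n).ncard := by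
  have hsplit : S ∩ Set.Iic n = insert 0 (S ∩ Set.Icc 1 n) := by
    ext m
    simp only [Set.mem_inter_iff, Set.mem_Iic, Set.mem_insert_iff, Set.mem_Icc]
    rcases m.eq_zero_or_pos with rfl | hm
    · simpa using h0
    · grind
  rw [hsplit, Set.ncard_insert_of_notMem (by simp)
    ((Set.finite_Icc 1 n).subset Set.inter_subset_right)]

theorem genus_add_ncard_inter_Iic {S : Set ℕ} {F : ℕ} (hF : ∀ n, F < n → n ∈ S) :
    genus S + (S ∩ Set.Iic F).ncard = F + 1 := by
  have hgaps : Sᶜ ⊆ Set.Iic F := fun n hn => not_lt.mp fun h => hn (hF n h)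
  have hunion : Sᶜ ∪ (S ∩ Set.Iic F) = Set.Iic F := by
    ext n
    by_cases n ∈ S <;> simp_all [@hgaps n]
  rw [genus, ← Set.ncard_union_eq (disjoint_compl_left.mono_right Set.inter_subset_left)
    ((Set.finite_Iic F).subset hgaps) ((Set.finite_Iic F).subset Set.inter_subset_right),
    hunion, ← Finset.coe_Iic, Set.ncard_coe_finset, Nat.card_Iic]

theorem Finset.two_mul_card_filter_of_swap {α : Type*} {R : Finset α} {σ : α → α}
    {P : α → Prop} [DecidablePred P] (hσ : ∀ p ∈ R, σ p ∈ R) (hσσ : ∀ p ∈ R, σ (σ p) = p)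
    (hP : ∀ p ∈ R, P (σ p) ↔ ¬ P p) :
    2 * (R.filter P).card = R.card := by
  have hswap : (R.filter P).card = (R.filter (¬ P ·)).card :=
    Finset.card_bij' (fun p _ => σ p) (fun p _ => σ p)
      (fun p hp => by
        rw [Finset.mem_filter] at hp ⊢
        exact ⟨hσ p hp.1, fun h => (hP p hp.1).1 h hp.2⟩)
      (fun p hp => by
        rw [Finset.mem_filter] at hp ⊢
        exact ⟨hσ p hp.1, (hP p hp.1).2 hp.2⟩)
      (fun p hp => hσσ p (Finset.mem_filter.mp hp).1)
      (fun p hp => hσσ p (Finset.mem_filter.mp hp).1)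
  have hsplit := Finset.card_filter_add_card_filter_not (s := R) P
  omega

section PairSemigroup

variable {a b : ℕ}

theorem injOn_mul_add_mul_of_lt_mul (hcop : a.Coprime b) :
    Set.InjOn (fun p : ℕ × ℕ => a * p.1 + b * p.2) {p | a * p.1 + b * p.2 < a * b} := by
  have hfst : ∀ p : ℕ × ℕ, a * p.1 + b * p.2 < a * b → p.1 < b := fun p hp =>
    Nat.lt_of_mul_lt_mul_left (a := a) (by omega)
  rintro p hp q hq (heq : a * p.1 + b * p.2 = a * q.1 + b * q.2)
  have hmod : a * p.1 ≡ a * q.1 [MOD b] := by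
    simpa [Nat.ModEq, Nat.add_mul_mod_self_left] using congrArg (· % b) heq
  have h1 : p.1 = q.1 :=
    (Nat.ModEq.cancel_left_of_coprime hcop.symm hmod).eq_of_lt_of_lt (hfst p hp) (hfst q hq)
  have h2 : p.2 = q.2 :=
    Nat.eq_of_mul_eq_mul_left (Nat.zero_lt_of_lt (hfst p hp)) (by rw [h1] at heq; omega)
  exact Prod.ext h1 h2

theorem inter_Iic_eq_image (M : ℕ) :
    {m | ∃ x y : ℕ, a * x + b * y = m} ∩ Set.Iic M =
      (fun p : ℕ × ℕ => a * p.1 + b * p.2) '' {p | a * p.1 + b * p.2 ≤ M} := by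
  ext n
  simp only [Set.mem_inter_iff, Set.mem_ofPred_eq, Set.mem_Iic, Set.mem_image, Prod.exists]
  constructor
  · rintro ⟨⟨x, y, rfl⟩, hn⟩
    exact ⟨x, y, hn, rfl⟩
  · rintro ⟨x, y, hxy, rfl⟩
    exact ⟨⟨x, y, rfl⟩, hxy⟩

theorem ncard_inter_Iic_of_lt_mul (hcop : a.Coprime b) {M : ℕ} (hM : M < a * b) :
    ({m | ∃ x y : ℕ, a * x + b * y = m} ∩ Set.Iic M).ncard =
      {p : ℕ × ℕ | a * p.1 + b * p.2 ≤ M}.ncard := by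
  have hinj : Set.InjOn (fun p : ℕ × ℕ => a * p.1 + b * p.2) {p | a * p.1 + b * p.2 ≤ M} :=
    (injOn_mul_add_mul_of_lt_mul hcop).mono fun p hp => lt_of_le_of_lt hp hM
  rw [inter_Iic_eq_image, hinj.ncard_image]

theorem exists_mul_add_mul_eq_iff_mem_closure {n : ℕ} :
    (∃ x y : ℕ, a * x + b * y = n) ↔ n ∈ AddSubmonoid.closure {a, b} := by
  simp only [AddSubmonoid.mem_closure_pair, smul_eq_mul, mul_comm]

theorem mul_sub_sub_add_one (ha : 2 ≤ a) (hb : 2 ≤ b) :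
    a * b - a - b + 1 = (a - 1) * (b - 1) := by
  obtain ⟨c, rfl⟩ := Nat.exists_eq_add_of_le (show 1 ≤ a by omega)
  obtain ⟨d, rfl⟩ := Nat.exists_eq_add_of_le (show 1 ≤ b by omega)
  have : 1 ≤ c * d := Nat.one_le_iff_ne_zero.mpr (Nat.mul_ne_zero (by omega) (by omega))
  simp only [Nat.add_sub_cancel_left]
  ring_nf
  omega

theorem mul_add_mul_add_reflect {x y : ℕ} (ha : 2 ≤ a) (hb : 2 ≤ b)
    (hx : x ≤ b - 2) (hy : y ≤ a - 2) :
    a * x + b * y + (a * (b - 2 - x) + b * (a - 2 - y)) = 2 * (a * b - a - b) := by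
  obtain ⟨c, rfl⟩ := Nat.exists_eq_add_of_le ha
  obtain ⟨d, rfl⟩ := Nat.exists_eq_add_of_le hb
  obtain ⟨u, rfl⟩ := Nat.exists_eq_add_of_le (show x ≤ d by omega)
  obtain ⟨v, rfl⟩ := Nat.exists_eq_add_of_le (show y ≤ c by omega)
  simp only [Nat.add_sub_cancel_left, show ∀ n, 2 + n - 2 = n by omega]
  ring_nf
  omega

theorem two_mul_ncard_le_frobenius (hcop : a.Coprime b) (ha : 2 ≤ a) (hb : 2 ≤ b) :
    2 * {p : ℕ × ℕ | a * p.1 + b * p.2 ≤ a * b - a - b}.ncard = (a - 1) * (b - 1) := by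
  set F := a * b - a - b
  have hFne : ∀ p : ℕ × ℕ, a * p.1 + b * p.2 ≠ F := fun p hp =>
    (frobeniusNumber_pair hcop ha hb).1 (exists_mul_add_mul_eq_iff_mem_closure.mp ⟨_, _, hp⟩)
  set R := Finset.range (b - 1) ×ˢ Finset.range (a - 1)
  have hmemR : ∀ p : ℕ × ℕ, p ∈ R ↔ p.1 ≤ b - 2 ∧ p.2 ≤ a - 2 := by
    intro p
    simp only [R, Finset.mem_product, Finset.mem_range]
    omega
  have hab : a + b ≤ a * b := Nat.add_le_mul ha hb
  have hset :
      {p : ℕ × ℕ | a * p.1 + b * p.2 ≤ F} = R.filter (fun p => a * p.1 + b * p.2 ≤ F) := by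
    ext p
    simp only [Finset.coe_filter, hmemR, Set.mem_ofPred_eq]
    refine ⟨fun hp => ⟨⟨?_, ?_⟩, hp⟩, And.right⟩
    · have : a * p.1 < a * (b - 1) := by rw [Nat.mul_sub_one]; omega
      have := Nat.lt_of_mul_lt_mul_left this
      omega
    · have : b * p.2 < b * (a - 1) := by rw [Nat.mul_sub_one, mul_comm b a]; omega
      have := Nat.lt_of_mul_lt_mul_left this
      omega
  rw [hset, Set.ncard_coe_finset, Finset.two_mul_card_filter_of_swap
    (σ := fun p => (b - 2 - p.1, a - 2 - p.2))]
  · simp [R, mul_comm]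
  · intro p hp
    rw [hmemR] at hp ⊢
    omega
  · intro p hp
    rw [hmemR] at hp
    ext <;> dsimp only <;> omega
  · intro p hp
    rw [hmemR] at hp
    have := mul_add_mul_add_reflect ha hb hp.1 hp.2
    have := hFne p
    dsimp only
    omega

theorem genus_pair (hcop : a.Coprime b) (ha : 2 ≤ a) (hb : 2 ≤ b) :
    genus {m | ∃ x y : ℕ, a * x + b * y = m} = (a * b - a - b + 1) / 2 := by
  have hfrob := frobeniusNumber_iff.mp (frobeniusNumber_pair hcop ha hb)
  have hsum := genus_add_ncard_inter_Iic (S := {m | ∃ x y : ℕ, a * x + b * y = m})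
    (F := a * b - a - b) fun n hn => exists_mul_add_mul_eq_iff_mem_closure.mpr (hfrob.2 n hn)
  have hlt : a * b - a - b < a * b := by have := Nat.add_le_mul ha hb; omega
  have hcount := two_mul_ncard_le_frobenius hcop ha hb
  rw [ncard_inter_Iic_of_lt_mul hcop hlt] at hsum
  rw [mul_sub_sub_add_one ha hb] at hsum ⊢
  omega

end PairSemigroup

theorem stmt_10 (a b : ℕ) (ha : 2 ≤ a) (hab : a < b) (hcop : Nat.Coprime a b)
    (S : Set ℕ) (hS : S = {m | ∃ x y : ℕ, a * x + b * y = m})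
    (g : ℕ) (hg : g = (a * b - a - b + 1) / 2) :
    ordNum S + 1 = {p : ℕ × ℕ | a * p.1 + b * p.2 ≤ g}.ncard := by
  subst hS hg
  have hb : 2 ≤ b := by omega
  have h0 : 0 ∈ {m | ∃ x y : ℕ, a * x + b * y = m} := ⟨0, 0, rfl⟩
  have hlt : (a * b - a - b + 1) / 2 < a * b := by have := Nat.add_le_mul ha hb; omega
  rw [ordNum, genus_pair hcop ha hb, ncard_inter_Icc_one_add_one h0,
    ncard_inter_Iic_of_lt_mul hcop hlt]
end

section
/- Let S = ⟨a, b⟩ where 2 ≤ a < b and gcd(a, b) = 1, and write g = (ab − a − b + 1)/2. Then r(S) = ⌊g/b⌋ + Σ_{n=0}^{⌊g/b⌋} ⌊(g − nb)/a⌋. -/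
/-!
For `y < a` the numbers `≡ b * y (mod a)` lying in `⟨a, b⟩` are exactly those `≥ b * y`, and
every residue class mod `a` is `b * y` for a unique `y < a`. So the gaps are the numbers
`b * y - a * k` with `y < a` and `1 ≤ k ≤ ⌊b y / a⌋`, and pairing `y` with `a - y` gives
`2 g = (a - 1)(b - 1)`. In particular `g < a b`, so every element of `⟨a, b⟩` up to `g` is
`a x + b y` for a unique pair `(x, y)`; counting these pairs by `y` gives the formula.
-/

def pairSemigroup (a b : ℕ) : Set ℕ := {m | ∃ x y : ℕ, a * x + b * y = m}

lemma zero_mem_pairSemigroup (a b : ℕ) : 0 ∈ pairSemigroup a b := ⟨0, 0, rfl⟩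

section Coprime

variable {a b : ℕ}

lemma exists_lt_modEq_mul (ha : 0 < a) (hcop : a.Coprime b) (m : ℕ) :
    ∃ y < a, m ≡ b * y [MOD a] := by
  have : NeZero a := ⟨ha.ne'⟩
  let u : (ZMod a)ˣ := ZMod.unitOfCoprime b hcop.symm
  refine ⟨(u⁻¹ * (m : ZMod a)).val, ZMod.val_lt _, ?_⟩
  rw [← ZMod.natCast_eq_natCast_iff, Nat.cast_mul, ZMod.natCast_val, ZMod.cast_id',
    id, ← ZMod.coe_unitOfCoprime b hcop.symm, Units.mul_inv_cancel_left]

lemma eq_of_mul_modEq_mul (hcop : a.Coprime b) {y y' : ℕ} (hy : y < a) (hy' : y' < a)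
    (h : b * y ≡ b * y' [MOD a]) : y = y' :=
  (h.cancel_left_of_coprime hcop).eq_of_lt_of_lt hy hy'

lemma mul_mod_ne_zero_of_coprime (hcop : a.Coprime b) {y : ℕ} (hy0 : 0 < y) (hy : y < a) :
    b * y % a ≠ 0 := fun h ↦
  hy0.ne' (eq_of_mul_modEq_mul hcop hy (hy0.trans hy) (by simpa [Nat.ModEq] using h))

lemma mem_pairSemigroup_iff_mul_le (hcop : a.Coprime b) {m y : ℕ} (hy : y < a)
    (hm : m ≡ b * y [MOD a]) : m ∈ pairSemigroup a b ↔ b * y ≤ m := by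
  constructor
  · rintro ⟨x, y', rfl⟩
    have hres : b * y ≡ b * (y' % a) [MOD a] :=
      hm.symm.trans ((Nat.mul_add_mod a x _).trans ((Nat.mod_modEq y' a).mul_left b).symm)
    rw [eq_of_mul_modEq_mul hcop hy (Nat.mod_lt _ (by omega)) hres]
    nlinarith [Nat.mod_le y' a]
  · intro hle
    obtain ⟨x, hx⟩ := (Nat.modEq_iff_dvd' hle).1 hm.symm
    exact ⟨x, y, by omega⟩

lemma mul_div_add_mul_sub_div (hcop : a.Coprime b) {y : ℕ} (hy0 : 0 < y) (hy : y < a) :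
    b * y / a + b * (a - y) / a = b - 1 := by
  have ha : 0 < a := hy0.trans hy
  have hsum : b * y + b * (a - y) = a * b := by
    rw [← Nat.mul_add, Nat.add_sub_cancel' hy.le, Nat.mul_comm]
  -- the two remainders are nonzero and add up to a multiple of `a`
  have hcarry : a ≤ b * y % a + b * (a - y) % a := by
    refine Nat.le_of_dvd ?_ ?_
    · have := mul_mod_ne_zero_of_coprime hcop hy0 hy
      omega
    · rw [Nat.dvd_iff_mod_eq_zero, ← Nat.add_mod, hsum, Nat.mul_mod_right]
  have := Nat.add_div (a := b * y) (b := b * (a - y)) ha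
  rw [hsum, Nat.mul_div_cancel_left _ ha, if_pos hcarry] at this
  exact Nat.eq_sub_of_add_eq this.symm

lemma two_mul_sum_mul_div (ha : 0 < a) (hcop : a.Coprime b) :
    2 * ∑ y ∈ Finset.range a, b * y / a = (a - 1) * (b - 1) := by
  have hreflect :
      ∑ y ∈ Finset.Ico 1 a, b * (a - y) / a = ∑ y ∈ Finset.Ico 1 a, b * y / a := by
    rw [Finset.sum_Ico_reflect (fun y ↦ b * y / a) 1 (Nat.le_succ a), Nat.add_sub_cancel,
      Nat.add_sub_cancel_left]
  calc 2 * ∑ y ∈ Finset.range a, b * y / a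
      = ∑ y ∈ Finset.Ico 1 a, (b * y / a + b * (a - y) / a) := by
        rw [Finset.sum_range_eq_add_Ico _ ha, Finset.sum_add_distrib, hreflect]
        simp only [Nat.mul_zero, Nat.zero_div, zero_add, two_mul]
    _ = ∑ _y ∈ Finset.Ico 1 a, (b - 1) := by
        refine Finset.sum_congr rfl fun y hy ↦ ?_
        rw [Finset.mem_Ico] at hy
        exact mul_div_add_mul_sub_div hcop hy.1 hy.2
    _ = (a - 1) * (b - 1) := by simp

lemma compl_pairSemigroup (ha : 0 < a) (hcop : a.Coprime b) :
    (pairSemigroup a b)ᶜ = ↑(((Finset.range a).sigma fun y ↦ Finset.Icc 1 (b * y / a)).image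
      fun p ↦ b * p.1 - a * p.2) := by
  ext m
  simp only [Set.mem_compl_iff, Finset.coe_image, Set.mem_image, Finset.mem_coe,
    Finset.mem_sigma, Finset.mem_range, Finset.mem_Icc, Sigma.exists]
  constructor
  · intro hm
    obtain ⟨y, hy, hres⟩ := exists_lt_modEq_mul ha hcop m
    have hlt : m < b * y := not_le.1 fun h ↦ hm ((mem_pairSemigroup_iff_mul_le hcop hy hres).2 h)
    obtain ⟨k, hk⟩ := (Nat.modEq_iff_dvd' hlt.le).1 hres
    refine ⟨y, k, ⟨hy, ?_, (Nat.le_div_iff_mul_le ha).2 ?_⟩, by omega⟩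
    · exact Nat.pos_of_ne_zero (by rintro rfl; omega)
    · rw [Nat.mul_comm]; omega
  · rintro ⟨y, k, ⟨hy, hk1, hk⟩, rfl⟩ hmem
    have hak : a * k ≤ b * y := by
      rw [Nat.mul_comm]; exact (Nat.le_div_iff_mul_le ha).1 hk
    have := (mem_pairSemigroup_iff_mul_le hcop hy (Nat.sub_mul_mod hak)).1 hmem
    have : 0 < a * k := Nat.mul_pos ha hk1
    omega

lemma two_mul_genus_pairSemigroup (ha : 0 < a) (hcop : a.Coprime b) :
    2 * genus (pairSemigroup a b) = (a - 1) * (b - 1) := by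
  rw [genus, compl_pairSemigroup ha hcop, Set.ncard_coe_finset, Finset.card_image_of_injOn,
    Finset.card_sigma, ← two_mul_sum_mul_div ha hcop]
  · simp
  rintro ⟨y, k⟩ hyk ⟨y', k'⟩ hyk' h
  simp only [Finset.coe_sigma, Set.mem_sigma_iff, Finset.coe_range, Set.mem_Iio, Finset.coe_Icc,
    Set.mem_Icc, Nat.le_div_iff_mul_le ha] at hyk hyk' h
  obtain ⟨hy, -, hk⟩ := hyk
  obtain ⟨hy', -, hk'⟩ := hyk'
  rw [Nat.mul_comm] at hk hk'
  obtain rfl : y = y' := eq_of_mul_modEq_mul hcop hy hy'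
    ((Nat.sub_mul_mod hk).symm.trans (h ▸ Nat.sub_mul_mod hk'))
  obtain rfl : k = k' := Nat.eq_of_mul_eq_mul_left ha (by omega)
  rfl

lemma ncard_pairSemigroup_inter_Iic (ha : 0 < a) (hb : 0 < b) (hcop : a.Coprime b) {N : ℕ}
    (hN : N < a * b) :
    (pairSemigroup a b ∩ Set.Iic N).ncard =
      ∑ y ∈ Finset.range (N / b + 1), ((N - y * b) / a + 1) := by
  have hNb : N / b < a := (Nat.div_lt_iff_lt_mul hb).2 hN
  have hset : pairSemigroup a b ∩ Set.Iic N = ↑(((Finset.range (N / b + 1)).sigma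
      fun y ↦ Finset.range ((N - y * b) / a + 1)).image fun p ↦ a * p.2 + b * p.1) := by
    ext m
    simp only [pairSemigroup, Set.mem_inter_iff, Set.mem_ofPred_eq, Set.mem_Iic, Finset.coe_image,
      Set.mem_image, Finset.mem_coe, Finset.mem_sigma, Finset.mem_range, Nat.lt_succ_iff,
      Nat.le_div_iff_mul_le ha, Nat.le_div_iff_mul_le hb, Sigma.exists]
    constructor
    · rintro ⟨⟨x, y, rfl⟩, hm⟩
      refine ⟨y, x, ⟨?_, ?_⟩, rfl⟩
      · rw [Nat.mul_comm]; omega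
      · rw [Nat.mul_comm x, Nat.mul_comm y]; omega
    · rintro ⟨y, x, ⟨hy, hx⟩, rfl⟩
      exact ⟨⟨x, y, rfl⟩, by rw [Nat.mul_comm a, Nat.mul_comm b]; omega⟩
  rw [hset, Set.ncard_coe_finset, Finset.card_image_of_injOn, Finset.card_sigma]
  · simp
  rintro ⟨y, x⟩ hyx ⟨y', x'⟩ hyx' h
  simp only [Finset.coe_sigma, Set.mem_sigma_iff, Finset.coe_range, Set.mem_Iio] at hyx hyx' h
  obtain rfl : y = y' := eq_of_mul_modEq_mul hcop (by omega) (by omega)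
    ((Nat.mul_add_mod a x _).symm.trans (h ▸ Nat.mul_add_mod a x' _))
  obtain rfl : x = x' := Nat.eq_of_mul_eq_mul_left ha (by omega)
  rfl

end Coprime

lemma ncard_inter_Iic_eq_ncard_inter_Icc_add_one {S : Set ℕ} (h0 : 0 ∈ S) (N : ℕ) :
    (S ∩ Set.Iic N).ncard = (S ∩ Set.Icc 1 N).ncard + 1 := by
  have : S ∩ Set.Iic N = insert 0 (S ∩ Set.Icc 1 N) := by
    ext m
    rcases m.eq_zero_or_pos with rfl | hm
    · simp [h0]
    · simp [Nat.one_le_iff_ne_zero, hm.ne']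
  rw [this, Set.ncard_insert_of_notMem (by simp) ((Set.finite_Icc 1 N).inter_of_right S)]

theorem stmt_11 (a b : ℕ) (ha : 2 ≤ a) (hab : a < b) (hcop : Nat.Coprime a b)
    (S : Set ℕ) (hS : S = {m | ∃ x y : ℕ, a * x + b * y = m})
    (g : ℕ) (hg : g = (a * b - a - b + 1) / 2) :
    ordNum S = g / b + ∑ n ∈ Finset.range (g / b + 1), (g - n * b) / a := by
  obtain rfl : S = pairSemigroup a b := hS
  have hsub : a * b - a - b + 1 = (a - 1) * (b - 1) := by
    have : a + b ≤ a * b := by nlinarith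
    rw [Nat.sub_sub]
    zify [this, (by omega : 1 ≤ a), (by omega : 1 ≤ b)]
    ring
  have hgenus : genus (pairSemigroup a b) = g := by
    have h2genus := two_mul_genus_pairSemigroup (by omega) hcop
    omega
  have hgab : g < a * b := by
    have : (a - 1) * (b - 1) ≤ a * b := Nat.mul_le_mul (Nat.sub_le a 1) (Nat.sub_le b 1)
    omega
  have hcount := ncard_pairSemigroup_inter_Iic (by omega) (by omega) hcop hgab
  rw [ncard_inter_Iic_eq_ncard_inter_Icc_add_one (zero_mem_pairSemigroup a b),
    Finset.sum_add_distrib, Finset.sum_const, Finset.card_range, smul_eq_mul, mul_one] at hcount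
  rw [ordNum, hgenus]
  omega
end

section
/- Let a ≥ 2 be a fixed integer, and let p = a if a is odd and p = 2a if a is even. There exist rational numbers α_0, ..., α_{p−1} and β_0, ..., β_{p−1} such that for every integer b > a with gcd(a, b) = 1, r(⟨a, b⟩) = α_{b mod p}·b + β_{b mod p}. In other words, r(⟨a, b⟩) is given by a linear quasipolynomial in b whose period divides a when a is odd and divides 2a when a is even. -/
/-!
Every element of `⟨a, b⟩` is uniquely `a x + b y` with `y < a`. Counting these representations
below `a b` gives `g = ∑_{y < a} ⌊b y / a⌋ = (a - 1)(b - 1) / 2`, and counting them in `[0, g]`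
gives `r = ∑_{y < a/2} (⌊(g - b y) / a⌋ + 1) - 1`, since `b y ≤ g` exactly when `y < a/2`.
Replacing `b` by `b + p k` moves each `(g - b y) / a` by `k p ((a - 1)/2 - y) / a`, an integer
by the choice of `p`, so every floor, and hence `r`, moves by a fixed multiple of `k`.
-/

open Finset

lemma Nat.div_add_div_eq_sub_one_of_add_eq_mul {a b m n : ℕ} (ha : 0 < a) (h : m + n = a * b)
    (hm : ¬ a ∣ m) : m / a + n / a = b - 1 := by
  have hm' : 0 < m % a := Nat.pos_of_ne_zero fun h0 => hm (Nat.dvd_of_mod_eq_zero h0)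
  have := Nat.mod_lt m ha
  have := Nat.mod_lt n ha
  have hdecomp : a * (m / a + n / a) + (m % a + n % a) = a * b := by
    rw [← h, ← Nat.div_add_mod m a, ← Nat.div_add_mod n a]
    simp only [Nat.mul_add_div ha, Nat.mul_add_mod, Nat.div_eq_of_lt (Nat.mod_lt _ ha),
      Nat.mod_mod]
    ring
  have hlt : m / a + n / a < b :=
    Nat.lt_of_mul_lt_mul_left (show a * (m / a + n / a) < a * b by omega)
  have hgt : b < m / a + n / a + 2 :=
    Nat.lt_of_mul_lt_mul_left (show a * b < a * (m / a + n / a + 2) by rw [mul_add]; omega)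
  generalize m / a + n / a = s at hlt hgt ⊢
  omega

namespace TwoGenerated

def semigroup (a b : ℕ) : Set ℕ := {m | ∃ x y : ℕ, a * x + b * y = m}

variable {a b : ℕ}

lemma eq_of_mul_add_mul_eq (hab : a.Coprime b) {x₁ y₁ x₂ y₂ : ℕ} (hy₁ : y₁ < a) (hy₂ : y₂ < a)
    (h : a * x₁ + b * y₁ = a * x₂ + b * y₂) : x₁ = x₂ ∧ y₁ = y₂ := by
  have hmod : b * y₁ ≡ b * y₂ [MOD a] := by
    simpa [Nat.ModEq, Nat.mul_add_mod] using congrArg (· % a) h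
  have hy : y₁ = y₂ := (Nat.ModEq.cancel_left_of_coprime hab hmod).eq_of_lt_of_lt hy₁ hy₂
  subst hy
  exact ⟨Nat.eq_of_mul_eq_mul_left (Nat.zero_lt_of_lt hy₁) (Nat.add_right_cancel h), rfl⟩

lemma mem_semigroup_of_le (hab : a.Coprime b) (ha : a ≠ 0) {m : ℕ} (hm : a * b ≤ m) :
    m ∈ semigroup a b := by
  obtain ⟨y, hy, hmod⟩ := Nat.exists_mul_mod_eq_of_coprime m hab.symm ha
  have hby : b * y ≤ m := by nlinarith
  obtain ⟨x, hx⟩ := (Nat.modEq_iff_dvd' hby).1 hmod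
  exact ⟨x, y, by omega⟩

lemma mem_semigroup_iff (ha : 0 < a) {m : ℕ} :
    m ∈ semigroup a b ↔ ∃ y < a, ∃ x, a * x + b * y = m := by
  refine ⟨fun ⟨x, y, hm⟩ => ⟨y % a, Nat.mod_lt y ha, x + b * (y / a), ?_⟩,
    fun ⟨y, _, x, hm⟩ => ⟨x, y, hm⟩⟩
  rw [← hm]
  conv_rhs => rw [← Nat.mod_add_div y a]
  ring

lemma ncard_inter_Iic (ha : 0 < a) (hab : a.Coprime b) (t : ℕ) :
    (semigroup a b ∩ Set.Iic t).ncard =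
      ∑ y ∈ (range a).filter (b * · ≤ t), ((t - b * y) / a + 1) := by
  set pairs := ((range a).filter (b * · ≤ t)).sigma fun y => range ((t - b * y) / a + 1)
  have hinj : Set.InjOn (fun q : (_ : ℕ) × ℕ => a * q.2 + b * q.1) pairs := by
    rintro ⟨y₁, x₁⟩ h₁ ⟨y₂, x₂⟩ h₂ h
    simp only [pairs, coe_sigma, Set.mem_sigma_iff, coe_filter, mem_range] at h₁ h₂
    obtain ⟨rfl, rfl⟩ := eq_of_mul_add_mul_eq hab h₁.1.1 h₂.1.1 h
    rfl
  have himage : semigroup a b ∩ Set.Iic t = pairs.image fun q => a * q.2 + b * q.1 := by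
    ext m
    simp only [Set.mem_inter_iff, mem_semigroup_iff ha, Set.mem_Iic, pairs, coe_image, coe_sigma,
      Set.mem_image, Set.mem_sigma_iff, coe_filter, Set.mem_ofPred_eq, mem_coe, mem_range,
      Sigma.exists, Nat.lt_succ_iff, Nat.le_div_iff_mul_le ha]
    constructor
    · rintro ⟨⟨y, hy, x, rfl⟩, hle⟩
      refine ⟨y, x, ⟨⟨hy, by omega⟩, ?_⟩, rfl⟩
      rw [mul_comm]
      omega
    · rintro ⟨y, x, ⟨⟨hy, hyt⟩, hx⟩, rfl⟩
      rw [mul_comm] at hx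
      exact ⟨⟨y, hy, x, rfl⟩, by omega⟩
  rw [himage, Set.ncard_coe_finset, card_image_of_injOn hinj, card_sigma]
  simp

lemma genus_eq_sum_div (ha : 0 < a) (hb : 0 < b) (hab : a.Coprime b) :
    genus (semigroup a b) = ∑ y ∈ range a, b * y / a := by
  have hcompl :
      (semigroup a b)ᶜ = Set.Iic (a * b - 1) \ (semigroup a b ∩ Set.Iic (a * b - 1)) := by
    ext m
    have : a * b ≤ m → m ∈ semigroup a b := mem_semigroup_of_le hab ha.ne'
    simp only [Set.mem_compl_iff, Set.mem_sdiff, Set.mem_Iic, Set.mem_inter_iff]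
    exact ⟨fun hm => ⟨by by_contra h; exact hm (this (by omega)), fun h => hm h.1⟩,
      fun hm h => hm.2 ⟨h, hm.1⟩⟩
  have hfilter : (range a).filter (b * · ≤ a * b - 1) = range a := by
    refine filter_true_of_mem fun y hy => ?_
    have : b * y < a * b := by nlinarith [mem_range.1 hy]
    omega
  have hterm : ∀ y ∈ range a, (a * b - 1 - b * y) / a + 1 + b * y / a = b := by
    intro y hy
    have : b * y < a * b := by nlinarith [mem_range.1 hy]
    have hdiv := Nat.mul_sub_div (b * y) a b this
    have : b * y / a < b := (Nat.div_lt_iff_lt_mul ha).2 (by nlinarith [mem_range.1 hy])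
    rw [show a * b - 1 - b * y = a * b - (b * y + 1) by omega, hdiv]
    omega
  have hsum :
      ∑ y ∈ range a, ((a * b - 1 - b * y) / a + 1) + ∑ y ∈ range a, b * y / a = a * b := by
    rw [← sum_add_distrib, sum_congr rfl hterm, sum_const, card_range, smul_eq_mul]
  rw [genus, hcompl, Set.ncard_sdiff Set.inter_subset_right, ncard_inter_Iic ha hab, hfilter,
    Set.ncard_Iic_nat]
  have : 0 < a * b := Nat.mul_pos ha hb
  omega

lemma two_mul_sum_div (ha : 0 < a) (hab : a.Coprime b) :
    2 * ∑ y ∈ range a, b * y / a = (a - 1) * (b - 1) := by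
  have hsum : ∑ y ∈ range a, b * y / a = ∑ y ∈ Ico 1 a, b * y / a := by
    rw [range_eq_Ico, sum_eq_sum_Ico_succ_bot ha]
    simp
  have hreflect : ∑ y ∈ Ico 1 a, b * (a - y) / a = ∑ y ∈ Ico 1 a, b * y / a := by
    rw [sum_Ico_reflect (fun y => b * y / a) 1 (Nat.le_succ a)]
    simp
  have hpair : ∀ y ∈ Ico 1 a, b * y / a + b * (a - y) / a = b - 1 := by
    intro y hy
    obtain ⟨hy₁, hy₂⟩ := mem_Ico.1 hy
    refine Nat.div_add_div_eq_sub_one_of_add_eq_mul ha ?_ fun hdvd => ?_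
    · rw [← mul_add, Nat.add_sub_cancel' hy₂.le, mul_comm]
    · exact absurd (Nat.le_of_dvd hy₁ ((Nat.Coprime.dvd_of_dvd_mul_left hab) hdvd)) (by omega)
  rw [hsum, two_mul]
  nth_rewrite 2 [← hreflect]
  rw [← sum_add_distrib, sum_congr rfl hpair, sum_const, Nat.card_Ico, smul_eq_mul]

lemma two_mul_genus (ha : 0 < a) (hb : 0 < b) (hab : a.Coprime b) :
    2 * genus (semigroup a b) = (a - 1) * (b - 1) := by
  rw [genus_eq_sum_div ha hb hab, two_mul_sum_div ha hab]

lemma filter_mul_le_genus (ha : 2 ≤ a) (hb : a ≤ b) (hab : a.Coprime b) :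
    (range a).filter (b * · ≤ genus (semigroup a b)) = range (a / 2) := by
  have hg := two_mul_genus (by omega : 0 < a) (by omega : 0 < b) hab
  obtain ⟨a, rfl⟩ : ∃ a', a = a' + 1 := ⟨a - 1, by omega⟩
  obtain ⟨b, rfl⟩ : ∃ b', b = b' + 1 := ⟨b - 1, by omega⟩
  simp only [Nat.add_sub_cancel] at hg
  ext y
  simp only [mem_filter, mem_range]
  constructor
  · rintro ⟨-, hy⟩
    by_contra! h
    have : a ≤ 2 * y := by omega
    nlinarith
  · intro hy
    have : 2 * y + 2 ≤ a + 1 := by omega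
    refine ⟨by omega, ?_⟩
    nlinarith

lemma ordNum_eq_sum (ha : 2 ≤ a) (hb : a ≤ b) (hab : a.Coprime b) :
    ordNum (semigroup a b) =
      ∑ y ∈ range (a / 2), ((genus (semigroup a b) - b * y) / a + 1) - 1 := by
  have hzero : 0 ∈ semigroup a b ∩ Set.Iic (genus (semigroup a b)) :=
    ⟨⟨0, 0, rfl⟩, Nat.zero_le _⟩
  have hpos : semigroup a b ∩ Set.Icc 1 (genus (semigroup a b)) =
      (semigroup a b ∩ Set.Iic (genus (semigroup a b))) \ {0} := by
    ext m
    simp only [Set.mem_inter_iff, Set.mem_Icc, Set.mem_Iic, Set.mem_sdiff, Set.mem_singleton_iff]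
    exact ⟨fun ⟨hm, h₁, hg⟩ => ⟨⟨hm, hg⟩, by omega⟩, fun ⟨⟨hm, hg⟩, h₀⟩ => ⟨hm, by omega, hg⟩⟩
  rw [ordNum, hpos, Set.ncard_sdiff_singleton_of_mem hzero, ncard_inter_Iic (by omega) hab,
    filter_mul_le_genus ha hb hab]

noncomputable def ordQuasi (a : ℕ) (x : ℚ) : ℚ :=
  ∑ y ∈ range (a / 2), ((⌊(((a : ℚ) - 1) * (x - 1) / 2 - x * y) / a⌋ : ℚ) + 1) - 1

noncomputable def ordQuasiSlope (a : ℕ) : ℚ := ∑ y ∈ range (a / 2), (((a : ℚ) - 1) / 2 - y) / a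

lemma ordNum_eq_ordQuasi (ha : 2 ≤ a) (hb : a ≤ b) (hab : a.Coprime b) :
    (ordNum (semigroup a b) : ℚ) = ordQuasi a b := by
  set g := genus (semigroup a b)
  have hg : (g : ℚ) = ((a : ℚ) - 1) * ((b : ℚ) - 1) / 2 := by
    have h2 := congrArg (Nat.cast : ℕ → ℚ) (two_mul_genus (by omega : 0 < a) (by omega) hab)
    push_cast [Nat.cast_sub (by omega : 1 ≤ a), Nat.cast_sub (by omega : 1 ≤ b)] at h2
    linarith
  have hterm : ∀ y ∈ range (a / 2), (((g - b * y) / a : ℕ) : ℚ) =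
      ⌊(((a : ℚ) - 1) * ((b : ℚ) - 1) / 2 - b * y) / a⌋ := by
    intro y hy
    rw [← filter_mul_le_genus ha hb hab, mem_filter] at hy
    have hle : b * y ≤ g := hy.2
    rw [← hg, ← Nat.cast_mul, ← Nat.cast_sub hle, Rat.floor_natCast_div_natCast]
    norm_cast
  have hsum : 1 ≤ ∑ y ∈ range (a / 2), ((g - b * y) / a + 1) :=
    (Nat.le_add_left _ _).trans <| single_le_sum (f := fun y => (g - b * y) / a + 1)
      (fun _ _ => Nat.zero_le _) (mem_range.2 (by omega : 0 < a / 2))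
  rw [ordNum_eq_sum ha hb hab, Nat.cast_sub hsum, Nat.cast_sum, ordQuasi]
  push_cast
  exact congrArg (· - 1) (sum_congr rfl fun y hy => by rw [hterm y hy])

lemma exists_intCast_eq_period_mul {p : ℕ} (ha : 0 < a) (hp : p = if Odd a then a else 2 * a)
    (y : ℕ) : ∃ n : ℤ, (n : ℚ) = p * (((a : ℚ) - 1) / 2 - y) / a := by
  have ha' : (a : ℚ) ≠ 0 := by positivity
  split_ifs at hp with hodd
  · obtain ⟨t, rfl⟩ := hodd
    exact ⟨t - y, by subst hp; push_cast; field_simp; ring⟩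
  · exact ⟨a - 1 - 2 * y, by subst hp; push_cast; field_simp⟩

lemma ordQuasi_add_period_mul {p : ℕ} (ha : 0 < a) (hp : p = if Odd a then a else 2 * a)
    (x : ℚ) (k : ℤ) : ordQuasi a (x + p * k) = ordQuasi a x + p * k * ordQuasiSlope a := by
  choose n hn using exists_intCast_eq_period_mul ha hp
  have ha' : (a : ℚ) ≠ 0 := by positivity
  have hfloor : ∀ y : ℕ, ⌊(((a : ℚ) - 1) * (x + p * k - 1) / 2 - (x + p * k) * y) / a⌋ =
      ⌊(((a : ℚ) - 1) * (x - 1) / 2 - x * y) / a⌋ + k * n y := by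
    intro y
    rw [← Int.floor_add_intCast]
    congr 1
    push_cast
    rw [hn]
    field_simp
    ring
  simp only [ordQuasi, ordQuasiSlope, hfloor, mul_sum, Int.cast_add, Int.cast_mul, hn]
  rw [sub_add_eq_add_sub, ← sum_add_distrib]
  exact congrArg (· - 1) (sum_congr rfl fun y _ => by ring)

end TwoGenerated

open TwoGenerated in
theorem stmt_14 (a : ℕ) (ha : 2 ≤ a)
    (p : ℕ) (hp : p = if Odd a then a else 2 * a) :
    ∃ α β : ℕ → ℚ, ∀ b : ℕ, a < b → Nat.Coprime a b →
      (ordNum {m | ∃ x y : ℕ, a * x + b * y = m} : ℚ) =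
        α (b % p) * (b : ℚ) + β (b % p) := by
  refine ⟨fun _ => ordQuasiSlope a, fun c => ordQuasi a c - ordQuasiSlope a * c, fun b hb hab => ?_⟩
  have hdecomp : (b : ℚ) = (b % p : ℕ) + p * ((b / p : ℕ) : ℤ) := by
    rw [Int.cast_natCast, ← Nat.cast_mul, ← Nat.cast_add, Nat.mod_add_div]
  have hperiod := ordQuasi_add_period_mul (by omega) hp (b % p : ℕ) (b / p : ℕ)
  rw [← hdecomp] at hperiod
  change (ordNum (semigroup a b) : ℚ) = _
  rw [ordNum_eq_ordQuasi ha hb.le hab, hperiod, hdecomp]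
  ring
end

section
/- Consider an infinite sequence of triples of positive integers (a_1,b_1,c_1), (a_2,b_2,c_2), ... such that for each i the integers a_i, b_i, c_i are pairwise relatively prime, 2 ≤ a_i < b_i < c_i, and a_1 < a_2 < a_3 < ⋯. Let S_i = ⟨b_i c_i, a_i c_i, a_i b_i⟩ be the supersymmetric numerical semigroup corresponding to (a_i, b_i, c_i). Then lim_{i→∞} r(S_i)/g(S_i) = 1/6. -/
/-!
Every element of `S = ⟨bc, ac, ab⟩` has a unique expression `x·bc + y·ac + z·ab` with `x < a`,
`y < b`, and the numbers `x·bc + y·ac` run over all residues modulo `ab` (Chinese remainder).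
Hence the gaps are the `x·bc + y·ac - k·ab` with `k ≥ 1`, so that
`g(S) = ∑ ⌊(x·bc + y·ac)/ab⌋ = abc - O(bc)`, and since `g(S) < abc` the condition `x < a, y < b`
is automatic below `g(S)`: `r(S) + 1` is the number of lattice points of the simplex
`x·bc + y·ac + z·ab ≤ g(S)`. Cutting `ℕ³` into boxes of size `bc × ac × ab` compares this count
with the number `(T+1)(T+2)(T+3)/6` of points of `u + v + w ≤ T`, which gives
`6 (r + 1) (abc)² = g³ (1 + O(1/a))`, and with `g ~ abc` this is `r / g → 1/6`.
-/

open Finset Filter Topology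

def latticeSimplex (p q r T : ℕ) : Finset (ℕ × ℕ × ℕ) :=
  (range (T + 1) ×ˢ range (T + 1) ×ˢ range (T + 1)).filter
    fun t => t.1 * p + t.2.1 * q + t.2.2 * r ≤ T

section LatticeSimplex

variable {p q r T : ℕ}

theorem mem_latticeSimplex (hp : 0 < p) (hq : 0 < q) (hr : 0 < r) {t : ℕ × ℕ × ℕ} :
    t ∈ latticeSimplex p q r T ↔ t.1 * p + t.2.1 * q + t.2.2 * r ≤ T := by
  have := Nat.le_mul_of_pos_right t.1 hp
  have := Nat.le_mul_of_pos_right t.2.1 hq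
  have := Nat.le_mul_of_pos_right t.2.2 hr
  simp only [latticeSimplex, mem_filter, mem_product, mem_range, and_iff_right_iff_imp]
  omega

theorem sum_range_sub_eq_choose (m : ℕ) : ∑ v ∈ range m, (m - v) = (m + 1).choose 2 := by
  induction m with
  | zero => rfl
  | succ m ih =>
    rw [sum_range_succ', Nat.choose_succ_succ', ← ih]
    simp [add_comm]

theorem card_latticeSimplex_one (T : ℕ) : #(latticeSimplex 1 1 1 T) = (T + 3).choose 3 := by
  have hsigma : #(latticeSimplex 1 1 1 T) = #((range (T + 1)).sigma fun u =>
      (range (T + 1 - u)).sigma fun v => range (T + 1 - u - v)) :=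
    card_nbij' (fun t => ⟨t.1, t.2.1, t.2.2⟩) (fun s => (s.1, s.2.1, s.2.2))
      (fun t ht => by simp only [coe_sigma, Set.mem_sigma_iff, mem_coe, mem_range,
          mem_latticeSimplex one_pos one_pos one_pos, mul_one] at ht ⊢; omega)
      (fun s hs => by simp only [coe_sigma, Set.mem_sigma_iff, mem_coe, mem_range,
          mem_latticeSimplex one_pos one_pos one_pos, mul_one] at hs ⊢; omega)
      (fun _ _ => rfl) (fun _ _ => rfl)
  simp only [hsigma, card_sigma, card_range, sum_range_sub_eq_choose]
  rw [← sum_range_reflect, ← Nat.sum_range_add_choose]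
  exact sum_congr rfl fun u hu => by rw [mem_range] at hu; congr 1; omega

theorem six_mul_card_latticeSimplex_one (T : ℕ) :
    6 * #(latticeSimplex 1 1 1 T) = (T + 1) * (T + 2) * (T + 3) := by
  rw [card_latticeSimplex_one, show 6 = (3).factorial from rfl,
    ← Nat.descFactorial_eq_factorial_mul_choose]
  simp [Nat.descFactorial_succ]
  ring

theorem card_latticeSimplex_one_le (hp : 0 < p) (hq : 0 < q) (hr : 0 < r) (T : ℕ) :
    #(latticeSimplex 1 1 1 T) ≤ #(latticeSimplex p q r T) * (p * q * r) := by
  have hinj : Function.Injective fun t : ℕ × ℕ × ℕ =>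
      ((t.1 / p, t.2.1 / q, t.2.2 / r), (t.1 % p, t.2.1 % q, t.2.2 % r)) :=
    Function.LeftInverse.injective (g := fun s => (s.1.1 * p + s.2.1, s.1.2.1 * q + s.2.2.1,
      s.1.2.2 * r + s.2.2.2)) fun t => by simp [Nat.div_add_mod']
  have h := card_le_card_of_injOn (s := latticeSimplex 1 1 1 T)
    (t := latticeSimplex p q r T ×ˢ range p ×ˢ range q ×ˢ range r) _ (fun t ht => ?_) hinj.injOn
  · simpa [card_product, mul_assoc] using h
  simp only [mem_coe, mem_product, mem_range, mem_latticeSimplex hp hq hr,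
    mem_latticeSimplex one_pos one_pos one_pos, mul_one] at ht ⊢
  refine ⟨?_, Nat.mod_lt _ hp, Nat.mod_lt _ hq, Nat.mod_lt _ hr⟩
  have := Nat.div_mul_le_self t.1 p
  have := Nat.div_mul_le_self t.2.1 q
  have := Nat.div_mul_le_self t.2.2 r
  omega

theorem card_latticeSimplex_mul_le (hp : 0 < p) (hq : 0 < q) (hr : 0 < r) (T : ℕ) :
    #(latticeSimplex p q r T) * (p * q * r) ≤ #(latticeSimplex 1 1 1 (T + p + q + r)) := by
  have hdivMod {x i m : ℕ} (hi : i < m) : (x * m + i) / m = x ∧ (x * m + i) % m = i := by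
    rw [Nat.div_mod_unique (by omega)]
    exact ⟨by ring, hi⟩
  have h := card_le_card_of_injOn (s := latticeSimplex p q r T ×ˢ range p ×ˢ range q ×ˢ range r)
    (t := latticeSimplex 1 1 1 (T + p + q + r))
    (fun s => (s.1.1 * p + s.2.1, s.1.2.1 * q + s.2.2.1, s.1.2.2 * r + s.2.2.2)) ?maps ?inj
  · simpa [card_product, mul_assoc] using h
  case maps =>
    intro s hs
    simp only [mem_coe, mem_product, mem_range, mem_latticeSimplex hp hq hr,
      mem_latticeSimplex one_pos one_pos one_pos, mul_one] at hs ⊢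
    omega
  case inj =>
    refine Set.LeftInvOn.injOn (f₁' := fun t =>
      ((t.1 / p, t.2.1 / q, t.2.2 / r), (t.1 % p, t.2.1 % q, t.2.2 % r))) fun s hs => ?_
    simp only [mem_coe, mem_product, mem_range] at hs
    simp [hdivMod hs.2.1, hdivMod hs.2.2.1, hdivMod hs.2.2.2]

theorem pow_three_le_six_mul_card_latticeSimplex (hp : 0 < p) (hq : 0 < q) (hr : 0 < r)
    (T : ℕ) : T ^ 3 ≤ 6 * #(latticeSimplex p q r T) * (p * q * r) :=
  calc T ^ 3 ≤ (T + 1) * (T + 2) * (T + 3) := by nlinarith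
    _ = 6 * #(latticeSimplex 1 1 1 T) := (six_mul_card_latticeSimplex_one T).symm
    _ ≤ 6 * (#(latticeSimplex p q r T) * (p * q * r)) :=
      Nat.mul_le_mul_left 6 (card_latticeSimplex_one_le hp hq hr T)
    _ = _ := by ring

theorem six_mul_card_latticeSimplex_le (hp : 0 < p) (hq : 0 < q) (hr : 0 < r) (T : ℕ) :
    6 * #(latticeSimplex p q r T) * (p * q * r) ≤ (T + p + q + r + 3) ^ 3 :=
  calc 6 * #(latticeSimplex p q r T) * (p * q * r)
      ≤ 6 * #(latticeSimplex 1 1 1 (T + p + q + r)) := by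
        rw [mul_assoc]; exact Nat.mul_le_mul_left 6 (card_latticeSimplex_mul_le hp hq hr T)
    _ = (T + p + q + r + 1) * (T + p + q + r + 2) * (T + p + q + r + 3) :=
      six_mul_card_latticeSimplex_one _
    _ ≤ (T + p + q + r + 3) ^ 3 := by nlinarith

end LatticeSimplex

theorem ncard_inter_Icc_zero {S : Set ℕ} (h0 : 0 ∈ S) (T : ℕ) :
    (S ∩ Set.Icc 0 T).ncard = (S ∩ Set.Icc 1 T).ncard + 1 := by
  have hinsert : S ∩ Set.Icc 0 T = insert 0 (S ∩ Set.Icc 1 T) := by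
    ext n
    simp only [Set.mem_inter_iff, Set.mem_Icc, Set.mem_insert_iff]
    rcases n.eq_zero_or_pos with rfl | hn
    · simp [h0]
    · simp [hn.ne', Nat.one_le_iff_ne_zero]
  rw [hinsert, Set.ncard_insert_of_notMem (by simp)
    ((Set.finite_Icc 1 T).subset Set.inter_subset_right)]

theorem tendsto_div_of_cube_bounds {ι : Type*} {l : Filter ι} {r g A E : ι → ℝ}
    (hA : Tendsto A l atTop) (hgA : Tendsto (fun i => g i / A i) l (𝓝 1))
    (hEA : Tendsto (fun i => E i / A i) l (𝓝 0))
    (hlow : ∀ᶠ i in l, g i ^ 3 ≤ 6 * (r i + 1) * A i ^ 2)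
    (hup : ∀ᶠ i in l, 6 * (r i + 1) * A i ^ 2 ≤ (g i + E i) ^ 3) :
    Tendsto (fun i => r i / g i) l (𝓝 (1 / 6)) := by
  have hApos : ∀ᶠ i in l, 0 < A i := hA.eventually_gt_atTop 0
  have hN : Tendsto (fun i => 6 * (r i + 1) / A i) l (𝓝 1) := by
    refine tendsto_of_tendsto_of_tendsto_of_le_of_le' (by simpa using hgA.pow 3)
      (by simpa using (hgA.add hEA).pow 3) ?_ ?_
    · filter_upwards [hApos, hlow] with i hA hl
      rw [div_pow, div_le_div_iff₀ (by positivity) hA]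
      nlinarith [mul_le_mul_of_nonneg_right hl hA.le]
    · filter_upwards [hApos, hup] with i hA hu
      rw [← add_div, div_pow, div_le_div_iff₀ hA (by positivity)]
      nlinarith [mul_le_mul_of_nonneg_right hu hA.le]
  have hlim := ((hN.div_const 6).sub (tendsto_const_nhds (x := (1 : ℝ)).div_atTop hA)).div
    hgA one_ne_zero
  rw [show (1 : ℝ) / 6 = (1 / 6 - 0) / 1 by norm_num]
  refine hlim.congr' ?_
  filter_upwards [hApos] with i hA
  rw [Pi.div_apply, show 6 * (r i + 1) / A i / 6 - 1 / A i = r i / A i by field_simp; ring,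
    div_div_div_cancel_right₀ hA.ne']

namespace Supersymmetric

def semigroup (a b c : ℕ) : Set ℕ :=
  {m | ∃ x y z : ℕ, x * (b * c) + y * (a * c) + z * (a * b) = m}

-- For `x < a`, `y < b` these form the Apéry set of `semigroup a b c` with respect to `a * b`.
def apery (a b c x y : ℕ) : ℕ := x * (b * c) + y * (a * c)

variable {a b c : ℕ}

theorem apery_modEq_left (x y : ℕ) : apery a b c x y ≡ x * (b * c) [MOD a] := by
  have h : y * (a * c) ≡ 0 [MOD a] := Nat.modEq_zero_iff_dvd.2 ⟨y * c, by ring⟩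
  simpa [apery] using h.add_left (x * (b * c))

theorem apery_modEq_right (x y : ℕ) : apery a b c x y ≡ y * (a * c) [MOD b] := by
  have h : x * (b * c) ≡ 0 [MOD b] := Nat.modEq_zero_iff_dvd.2 ⟨x * c, by ring⟩
  simpa [apery] using h.add_right (y * (a * c))

theorem eq_of_apery_modEq (hab : a.Coprime b) (hac : a.Coprime c) (hbc : b.Coprime c)
    {x y x' y' : ℕ} (hx : x < a) (hy : y < b) (hx' : x' < a) (hy' : y' < b)
    (h : apery a b c x y ≡ apery a b c x' y' [MOD a * b]) : x = x' ∧ y = y' :=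
  ⟨(((apery_modEq_left x y).symm.trans ((h.of_mul_right b).trans (apery_modEq_left x' y'))
      ).cancel_right_of_coprime (hab.mul_right hac)).eq_of_lt_of_lt hx hx',
    (((apery_modEq_right x y).symm.trans ((h.of_mul_left a).trans (apery_modEq_right x' y'))
      ).cancel_right_of_coprime (hab.symm.mul_right hbc)).eq_of_lt_of_lt hy hy'⟩

theorem exists_apery_modEq (ha : 0 < a) (hb : 0 < b)
    (hab : a.Coprime b) (hac : a.Coprime c) (hbc : b.Coprime c) (n : ℕ) :
    ∃ x < a, ∃ y < b, n ≡ apery a b c x y [MOD a * b] := by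
  have hsurj := surjOn_of_injOn_of_card_le (s := range a ×ˢ range b) (t := range (a * b))
    (fun p => apery a b c p.1 p.2 % (a * b))
    (fun p _ => mem_range.2 (Nat.mod_lt _ (by positivity)))
    (fun p hp p' hp' h => by
      simp only [coe_product, Set.mem_prod, mem_coe, mem_range] at hp hp'
      obtain ⟨h1, h2⟩ := eq_of_apery_modEq hab hac hbc hp.1 hp.2 hp'.1 hp'.2 h
      exact Prod.ext h1 h2)
    (by simp)
  obtain ⟨⟨x, y⟩, hxy, h⟩ := hsurj (mem_range.2 (Nat.mod_lt n (by positivity)))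
  simp only [coe_product, Set.mem_prod, mem_coe, mem_range] at hxy
  exact ⟨x, hxy.1, y, hxy.2, by simpa [Nat.ModEq, Nat.mod_mod] using h.symm⟩

theorem mem_semigroup_iff (ha : 0 < a) (hb : 0 < b) {n : ℕ} :
    n ∈ semigroup a b c ↔ ∃ x < a, ∃ y < b, ∃ z, apery a b c x y + z * (a * b) = n := by
  constructor
  · rintro ⟨X, Y, Z, rfl⟩
    refine ⟨X % a, Nat.mod_lt _ ha, Y % b, Nat.mod_lt _ hb, Z + X / a * c + Y / b * c, ?_⟩
    conv_rhs => rw [← Nat.mod_add_div X a, ← Nat.mod_add_div Y b]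
    simp only [apery]
    ring
  · rintro ⟨x, -, y, -, z, rfl⟩
    exact ⟨x, y, z, rfl⟩

theorem eq_of_apery_add_mul_eq (hab : a.Coprime b) (hac : a.Coprime c) (hbc : b.Coprime c)
    {x y z x' y' z' : ℕ} (hx : x < a) (hy : y < b) (hx' : x' < a) (hy' : y' < b)
    (h : apery a b c x y + z * (a * b) = apery a b c x' y' + z' * (a * b)) :
    x = x' ∧ y = y' ∧ z = z' := by
  have hmod : apery a b c x y ≡ apery a b c x' y' [MOD a * b] := by
    simpa [Nat.ModEq] using congrArg (· % (a * b)) h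
  obtain ⟨rfl, rfl⟩ := eq_of_apery_modEq hab hac hbc hx hy hx' hy' hmod
  exact ⟨rfl, rfl, Nat.eq_of_mul_eq_mul_right (Nat.mul_pos (by omega) (by omega))
    (Nat.add_left_cancel h)⟩

theorem apery_sub_mul_notMem (hab : a.Coprime b) (hac : a.Coprime c) (hbc : b.Coprime c)
    {x y k : ℕ} (hx : x < a) (hy : y < b) (hk : 0 < k) (hka : k * (a * b) ≤ apery a b c x y) :
    apery a b c x y - k * (a * b) ∉ semigroup a b c := by
  rw [mem_semigroup_iff (by omega) (by omega)]
  rintro ⟨x', hx', y', hy', z, h⟩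
  have := (eq_of_apery_add_mul_eq hab hac hbc hx' hy' hx hy (z := z + k) (z' := 0) (by
    rw [add_mul, ← add_assoc, h]; omega)).2.2
  omega

theorem exists_apery_sub_mul_of_notMem (ha : 0 < a) (hb : 0 < b)
    (hab : a.Coprime b) (hac : a.Coprime c) (hbc : b.Coprime c) {n : ℕ}
    (hn : n ∉ semigroup a b c) :
    ∃ x < a, ∃ y < b, ∃ k, 0 < k ∧ k * (a * b) ≤ apery a b c x y ∧
      apery a b c x y - k * (a * b) = n := by
  obtain ⟨x, hx, y, hy, hmod⟩ := exists_apery_modEq ha hb hab hac hbc n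
  rcases le_or_gt (apery a b c x y) n with hle | hlt
  · obtain ⟨z, hz⟩ := (Nat.modEq_iff_dvd' hle).1 hmod.symm
    exact (hn ((mem_semigroup_iff ha hb).2 ⟨x, hx, y, hy, z, by rw [mul_comm]; omega⟩)).elim
  · obtain ⟨k, hk⟩ := (Nat.modEq_iff_dvd' hlt.le).1 hmod
    refine ⟨x, hx, y, hy, k, Nat.pos_of_ne_zero ?_, ?_, ?_⟩
    · rintro rfl; omega
    · rw [mul_comm]; omega
    · rw [mul_comm]; omega

theorem sum_two_mul_apery_add (a b c : ℕ) :
    ∑ p ∈ range a ×ˢ range b, (2 * apery a b c p.1 p.2 + c * (a + b)) =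
      2 * (a * b) * (a * b * c) := by
  have hodd (n : ℕ) : ∑ i ∈ range n, (2 * i + 1) = n ^ 2 := by
    induction n with
    | zero => rfl
    | succ n ih => rw [sum_range_succ, ih]; ring
  have hterm (x y : ℕ) : 2 * apery a b c x y + c * (a + b) =
      (2 * x + 1) * (b * c) + (2 * y + 1) * (a * c) := by
    simp only [apery]; ring
  simp only [sum_product, hterm]
  rw [sum_congr rfl fun x _ => sum_add_distrib, sum_add_distrib]
  simp only [sum_const, card_range, smul_eq_mul, ← mul_sum, ← sum_mul, hodd]
  ring

section Genus

variable (ha : 0 < a) (hb : 0 < b) (hab : a.Coprime b) (hac : a.Coprime c) (hbc : b.Coprime c)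
include ha hb hab hac hbc

theorem compl_semigroup_eq_image : (semigroup a b c)ᶜ =
    (fun s : (_ : ℕ × ℕ) × ℕ => apery a b c s.1.1 s.1.2 - s.2 * (a * b)) ''
      ((range a ×ˢ range b).sigma fun p => Icc 1 (apery a b c p.1 p.2 / (a * b))) := by
  ext n
  simp only [Set.mem_compl_iff, Set.mem_image, mem_coe, mem_sigma, mem_product, mem_range,
    mem_Icc, Nat.le_div_iff_mul_le (Nat.mul_pos ha hb), Sigma.exists]
  constructor
  · intro hn
    obtain ⟨x, hx, y, hy, k, hk, hka, rfl⟩ := exists_apery_sub_mul_of_notMem ha hb hab hac hbc hn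
    exact ⟨(x, y), k, ⟨⟨hx, hy⟩, hk, hka⟩, rfl⟩
  · rintro ⟨⟨x, y⟩, k, ⟨⟨hx, hy⟩, hk, hka⟩, rfl⟩
    exact apery_sub_mul_notMem hab hac hbc hx hy hk hka

theorem genus_semigroup :
    genus (semigroup a b c) = ∑ p ∈ range a ×ˢ range b, apery a b c p.1 p.2 / (a * b) := by
  rw [genus, compl_semigroup_eq_image ha hb hab hac hbc, Set.InjOn.ncard_image,
    Set.ncard_coe_finset, card_sigma]
  · simp
  rintro ⟨⟨x, y⟩, k⟩ hs ⟨⟨x', y'⟩, k'⟩ hs' h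
  simp only [coe_sigma, Set.mem_sigma_iff, mem_coe, mem_product, mem_range, mem_Icc,
    Nat.le_div_iff_mul_le (Nat.mul_pos ha hb)] at hs hs' h
  obtain ⟨rfl, rfl, rfl⟩ := eq_of_apery_add_mul_eq hab hac hbc hs.1.1 hs.1.2 hs'.1.1 hs'.1.2
    (z := k') (z' := k) (by omega)
  rfl

theorem two_mul_genus_add_le :
    2 * genus (semigroup a b c) + c * (a + b) ≤ 2 * (a * b * c) := by
  have hm : 0 < a * b := Nat.mul_pos ha hb
  have hsum := sum_two_mul_apery_add a b c
  have hfloor :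
      a * b * genus (semigroup a b c) ≤ ∑ p ∈ range a ×ˢ range b, apery a b c p.1 p.2 := by
    rw [genus_semigroup ha hb hab hac hbc, mul_sum]
    exact sum_le_sum fun p _ => Nat.mul_div_le _ _
  rw [sum_add_distrib, ← mul_sum, sum_const, card_product, card_range, card_range,
    smul_eq_mul] at hsum
  refine Nat.le_of_mul_le_mul_left ?_ hm
  nlinarith

theorem le_two_mul_genus_add :
    2 * (a * b * c) ≤ 2 * genus (semigroup a b c) + c * (a + b) + 2 * (a * b) := by
  have hm : 0 < a * b := Nat.mul_pos ha hb
  have hsum := sum_two_mul_apery_add a b c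
  have hceil : ∑ p ∈ range a ×ˢ range b, apery a b c p.1 p.2 ≤
      a * b * genus (semigroup a b c) + a * b * (a * b) := by
    rw [genus_semigroup ha hb hab hac hbc, mul_sum]
    calc _ ≤ ∑ p ∈ range a ×ˢ range b, (a * b * (apery a b c p.1 p.2 / (a * b)) + a * b) :=
          sum_le_sum fun p _ => (Nat.lt_mul_div_succ _ hm).le
      _ = _ := by simp [sum_add_distrib]
  rw [sum_add_distrib, ← mul_sum, sum_const, card_product, card_range, card_range,
    smul_eq_mul] at hsum
  refine Nat.le_of_mul_le_mul_left ?_ hm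
  nlinarith

end Genus

section Ordinarization

variable (ha : 0 < a) (hb : 0 < b) (hc : 0 < c)
  (hab : a.Coprime b) (hac : a.Coprime c) (hbc : b.Coprime c)
include ha hb hc hab hac hbc

theorem genus_lt : genus (semigroup a b c) < a * b * c := by
  have := two_mul_genus_add_le ha hb hab hac hbc
  have : 0 < c * (a + b) := by positivity
  omega

theorem ncard_semigroup_inter_Icc {T : ℕ} (hT : T < a * b * c) :
    (semigroup a b c ∩ Set.Icc 0 T).ncard = #(latticeSimplex (b * c) (a * c) (a * b) T) := by
  have hmem {t : ℕ × ℕ × ℕ} := mem_latticeSimplex (T := T) (t := t)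
    (Nat.mul_pos hb hc) (Nat.mul_pos ha hc) (Nat.mul_pos ha hb)
  have hlt {t : ℕ × ℕ × ℕ} (ht : t ∈ latticeSimplex (b * c) (a * c) (a * b) T) :
      t.1 < a ∧ t.2.1 < b := by
    rw [hmem] at ht
    constructor
    · exact Nat.lt_of_mul_lt_mul_right
        ((by omega : _ ≤ T).trans_lt (hT.trans_eq (mul_assoc a b c)))
    · exact Nat.lt_of_mul_lt_mul_right (a := a * c)
        ((by omega : _ ≤ T).trans_lt (hT.trans_eq (by ring)))
  have himage : semigroup a b c ∩ Set.Icc 0 T = (fun t : ℕ × ℕ × ℕ =>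
      apery a b c t.1 t.2.1 + t.2.2 * (a * b)) '' latticeSimplex (b * c) (a * c) (a * b) T := by
    ext n
    simp only [Set.mem_inter_iff, Set.mem_Icc, Set.mem_image, mem_coe, hmem,
      mem_semigroup_iff ha hb, Prod.exists]
    constructor
    · rintro ⟨⟨x, -, y, -, z, rfl⟩, -, hn⟩
      exact ⟨x, y, z, hn, rfl⟩
    · rintro ⟨x, y, z, hn, rfl⟩
      obtain ⟨hx, hy⟩ := hlt ((hmem (t := (x, y, z))).2 hn)
      exact ⟨⟨x, hx, y, hy, z, rfl⟩, Nat.zero_le _, hn⟩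
  rw [himage, Set.InjOn.ncard_image, Set.ncard_coe_finset]
  rintro ⟨x, y, z⟩ ht ⟨x', y', z'⟩ ht' h
  obtain ⟨rfl, rfl, rfl⟩ :=
    eq_of_apery_add_mul_eq hab hac hbc (hlt ht).1 (hlt ht).2 (hlt ht').1 (hlt ht').2 h
  rfl

theorem ordNum_add_one :
    ordNum (semigroup a b c) + 1 =
      #(latticeSimplex (b * c) (a * c) (a * b) (genus (semigroup a b c))) := by
  rw [ordNum, ← ncard_inter_Icc_zero (show 0 ∈ semigroup a b c from ⟨0, 0, 0, by simp⟩),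
    ncard_semigroup_inter_Icc ha hb hc hab hac hbc (genus_lt ha hb hc hab hac hbc)]

theorem genus_pow_three_le :
    genus (semigroup a b c) ^ 3 ≤ 6 * (ordNum (semigroup a b c) + 1) * (a * b * c) ^ 2 := by
  rw [ordNum_add_one ha hb hc hab hac hbc,
    show (a * b * c) ^ 2 = b * c * (a * c) * (a * b) by ring]
  exact pow_three_le_six_mul_card_latticeSimplex (Nat.mul_pos hb hc) (Nat.mul_pos ha hc)
    (Nat.mul_pos ha hb) _

theorem six_mul_ordNum_add_one_le :
    6 * (ordNum (semigroup a b c) + 1) * (a * b * c) ^ 2 ≤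
      (genus (semigroup a b c) + b * c + a * c + a * b + 3) ^ 3 := by
  rw [ordNum_add_one ha hb hc hab hac hbc,
    show (a * b * c) ^ 2 = b * c * (a * c) * (a * b) by ring]
  exact six_mul_card_latticeSimplex_le (Nat.mul_pos hb hc) (Nat.mul_pos ha hc)
    (Nat.mul_pos ha hb) _

end Ordinarization

section Ratios

variable (ha : 0 < a) (hab_lt : a < b) (hbc_lt : b < c)
  (hab : a.Coprime b) (hac : a.Coprime c) (hbc : b.Coprime c)
include ha hab_lt hbc_lt hab hac hbc

theorem genus_div_le_one : (genus (semigroup a b c) : ℝ) / (a * b * c : ℕ) ≤ 1 :=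
  div_le_one_of_le₀ (by exact_mod_cast (genus_lt ha (by omega) (by omega) hab hac hbc).le)
    (Nat.cast_nonneg _)

theorem one_sub_two_div_le_genus_div :
    1 - 2 / (a : ℝ) ≤ (genus (semigroup a b c) : ℝ) / (a * b * c : ℕ) := by
  have hle : a * b * c ≤ genus (semigroup a b c) + 2 * (b * c) := by
    have := le_two_mul_genus_add ha (by omega) hab hac hbc
    nlinarith
  have hpos : (0 : ℝ) < a := by exact_mod_cast ha
  have hA : (0 : ℝ) < (a * b * c : ℕ) := by
    exact_mod_cast Nat.mul_pos (Nat.mul_pos ha (by omega)) (by omega)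
  rw [le_div_iff₀ hA, sub_mul,
    show 2 / (a : ℝ) * ((a * b * c : ℕ) : ℝ) = ((2 * (b * c) : ℕ) : ℝ) by push_cast; field_simp]
  rw [sub_le_iff_le_add, ← Nat.cast_add, one_mul, Nat.cast_le]
  exact hle

theorem six_mul_ordNum_add_one_le_of_lt :
    6 * (ordNum (semigroup a b c) + 1) * (a * b * c) ^ 2 ≤
      (genus (semigroup a b c) + 4 * (b * c)) ^ 3 :=
  (six_mul_ordNum_add_one_le ha (by omega) (by omega) hab hac hbc).trans
    (Nat.pow_le_pow_left (by nlinarith) 3)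

omit ha hab hac hbc in
theorem cast_four_mul_div_cast_mul :
    ((4 * (b * c) : ℕ) : ℝ) / (a * b * c : ℕ) = 4 / a := by
  have : (0 : ℝ) < b * c := by exact_mod_cast Nat.mul_pos (by omega) (by omega)
  push_cast
  rw [mul_assoc (a : ℝ), mul_div_mul_right _ _ this.ne']

end Ratios

end Supersymmetric

open Supersymmetric in
theorem stmt_15_general (a b c : ℕ → ℕ)
    (hab : ∀ i, a i < b i) (hbc : ∀ i, b i < c i)
    (hcopab : ∀ i, Nat.Coprime (a i) (b i))
    (hcopac : ∀ i, Nat.Coprime (a i) (c i))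
    (hcopbc : ∀ i, Nat.Coprime (b i) (c i))
    (hmono : StrictMono a)
    (S : ℕ → Set ℕ)
    (hS : ∀ i, S i = {m | ∃ x y z : ℕ,
      x * (b i * c i) + y * (a i * c i) + z * (a i * b i) = m}) :
    Filter.Tendsto (fun i => (ordNum (S i) : ℝ) / (genus (S i) : ℝ))
      Filter.atTop (nhds (1 / 6)) := by
  obtain rfl : S = fun i => semigroup (a i) (b i) (c i) := funext hS
  have ha : Tendsto a atTop atTop := hmono.tendsto_atTop
  have hpos : ∀ᶠ i in atTop, 0 < a i := ha.eventually_gt_atTop 0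
  have hb (i : ℕ) : 0 < b i := (Nat.zero_le _).trans_lt (hab i)
  have hc (i : ℕ) : 0 < c i := (hb i).trans (hbc i)
  have hdiv (k : ℝ) : Tendsto (fun i => k / (a i : ℝ)) atTop (𝓝 0) :=
    tendsto_const_nhds.div_atTop (tendsto_natCast_atTop_atTop.comp ha)
  apply tendsto_div_of_cube_bounds (A := fun i => ((a i * b i * c i : ℕ) : ℝ))
    (E := fun i => ((4 * (b i * c i) : ℕ) : ℝ))
  · refine tendsto_natCast_atTop_atTop.comp (tendsto_atTop_mono (fun i => ?_) ha)
    rw [mul_assoc]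
    exact Nat.le_mul_of_pos_right _ (Nat.mul_pos (hb i) (hc i))
  · refine tendsto_of_tendsto_of_tendsto_of_le_of_le' (by simpa using (hdiv 2).const_sub 1)
      tendsto_const_nhds ?_ ?_
    · filter_upwards [hpos] with i hi
      exact one_sub_two_div_le_genus_div hi (hab i) (hbc i) (hcopab i) (hcopac i) (hcopbc i)
    · filter_upwards [hpos] with i hi
      exact genus_div_le_one hi (hab i) (hbc i) (hcopab i) (hcopac i) (hcopbc i)
  · exact (hdiv 4).congr fun i => (cast_four_mul_div_cast_mul (hab i) (hbc i)).symm
  · filter_upwards [hpos] with i hi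
    exact_mod_cast genus_pow_three_le hi (hb i) (hc i) (hcopab i) (hcopac i) (hcopbc i)
  · filter_upwards [hpos] with i hi
    exact_mod_cast six_mul_ordNum_add_one_le_of_lt hi (hab i) (hbc i) (hcopab i) (hcopac i)
      (hcopbc i)

theorem stmt_15 (a b c : ℕ → ℕ)
    (ha2 : ∀ i, 2 ≤ a i) (hab : ∀ i, a i < b i) (hbc : ∀ i, b i < c i)
    (hcopab : ∀ i, Nat.Coprime (a i) (b i))
    (hcopac : ∀ i, Nat.Coprime (a i) (c i))
    (hcopbc : ∀ i, Nat.Coprime (b i) (c i))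
    (hmono : StrictMono a)
    (S : ℕ → Set ℕ)
    (hS : ∀ i, S i = {m | ∃ x y z : ℕ,
      x * (b i * c i) + y * (a i * c i) + z * (a i * b i) = m}) :
    Filter.Tendsto (fun i => (ordNum (S i) : ℝ) / (genus (S i) : ℝ))
      Filter.atTop (nhds (1 / 6)) :=
  stmt_15_general a b c hab hbc hcopab hcopac hcopbc hmono S hS
end

section
/- Let 2 ≤ a_1 < a_2 < ⋯ < a_n be pairwise relatively prime integers and let S = ⟨q_1, ..., q_n⟩ be the supersymmetric numerical semigroup corresponding to a_1, ..., a_n. Suppose x ∈ S and (x_1, ..., x_n) is a factorization of x, i.e. x_1 q_1 + ⋯ + x_n q_n = x. Then the number of factorizations of x in S is |Z(x)| = C(n + Σ_{i=1}^n ⌊x_i/a_i⌋ − 1, n − 1), where C denotes the binomial coefficient. -/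
/-!
Since `a i` divides `q j` for `j ≠ i` and is coprime to `q i`, reducing `∑ v j * q j = x` modulo
`a i` pins down `v i mod a i`: every factorization of `x` has the residues `r i = x_i mod a i`.
Writing `v i = r i + a i * k i` and using `q i * a i = ∏ a`, the equation becomes
`∑ k i = ∑ ⌊x_i / a i⌋`, so the factorizations are counted by stars and bars.
-/

open Finset

theorem Nat.card_fun_sum_eq_choose (ι : Type*) [Fintype ι] [DecidableEq ι] (m : ℕ) :
    Nat.card {v : ι → ℕ // ∑ i, v i = m} = (Fintype.card ι + m - 1).choose m := by
  rw [← Nat.card_congr (Sym.equivNatSumOfFintype ι m), Nat.card_eq_fintype_card,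
    Sym.card_sym_eq_choose]

section Cofactor

variable {ι : Type*} [Fintype ι] [DecidableEq ι] {a : ι → ℕ}

/-- The paper's generator `q i`. -/
def cofactor (a : ι → ℕ) (i : ι) : ℕ := ∏ j ∈ univ.erase i, a j

theorem cofactor_mul_self (i : ι) : cofactor a i * a i = ∏ j, a j :=
  prod_erase_mul _ _ (mem_univ i)

theorem cofactor_eq_prod_div {i : ι} (ha : 0 < a i) : cofactor a i = (∏ j, a j) / a i :=
  (Nat.div_eq_of_eq_mul_left ha (cofactor_mul_self i).symm).symm

theorem dvd_cofactor {i j : ι} (hij : i ≠ j) : a i ∣ cofactor a j :=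
  dvd_prod_of_mem a (mem_erase.2 ⟨hij, mem_univ i⟩)

theorem coprime_cofactor (hcop : Pairwise fun i j => Nat.Coprime (a i) (a j)) (i : ι) :
    (cofactor a i).Coprime (a i) :=
  Nat.Coprime.prod_left fun _ hj => hcop (ne_of_mem_erase hj)

theorem sum_mul_cofactor_modEq (u : ι → ℕ) (i : ι) :
    ∑ j, u j * cofactor a j ≡ u i * cofactor a i [MOD a i] := by
  have hrest : a i ∣ ∑ j ∈ univ.erase i, u j * cofactor a j :=
    dvd_sum fun j hj => dvd_mul_of_dvd_right (dvd_cofactor (ne_of_mem_erase hj).symm) _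
  rw [← add_sum_erase _ _ (mem_univ i)]
  simpa using (Nat.modEq_zero_iff_dvd.2 hrest).add_left (u i * cofactor a i)

theorem sum_mul_cofactor_eq_prod_mul_add (v : ι → ℕ) :
    ∑ i, v i * cofactor a i =
      (∏ j, a j) * ∑ i, v i / a i + ∑ i, v i % a i * cofactor a i := by
  rw [mul_sum, ← sum_add_distrib]
  refine sum_congr rfl fun i _ => ?_
  conv_lhs => rw [← Nat.div_add_mod (v i) (a i)]
  rw [← cofactor_mul_self i]
  ring

theorem sum_mul_cofactor_eq_iff (ha : ∀ i, 0 < a i)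
    (hcop : Pairwise fun i j => Nat.Coprime (a i) (a j)) {v w : ι → ℕ} :
    ∑ i, v i * cofactor a i = ∑ i, w i * cofactor a i ↔
      (∀ i, v i % a i = w i % a i) ∧ ∑ i, v i / a i = ∑ i, w i / a i := by
  constructor
  · intro h
    have hmod (i : ι) : v i % a i = w i % a i :=
      Nat.ModEq.cancel_right_of_coprime (coprime_cofactor hcop i).symm <|
        (sum_mul_cofactor_modEq v i).symm.trans (h ▸ sum_mul_cofactor_modEq w i)
    rw [sum_mul_cofactor_eq_prod_mul_add v, sum_mul_cofactor_eq_prod_mul_add w] at h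
    simp only [hmod] at h
    exact ⟨hmod, Nat.eq_of_mul_eq_mul_left (prod_pos fun i _ => ha i) (Nat.add_right_cancel h)⟩
  · rintro ⟨hmod, hsum⟩
    rw [sum_mul_cofactor_eq_prod_mul_add v, sum_mul_cofactor_eq_prod_mul_add w]
    simp only [hmod, hsum]

theorem factorizations_eq_image (ha : ∀ i, 0 < a i)
    (hcop : Pairwise fun i j => Nat.Coprime (a i) (a j)) (w : ι → ℕ) :
    {v : ι → ℕ | ∑ i, v i * cofactor a i = ∑ i, w i * cofactor a i} =
      (fun k i => w i % a i + a i * k i) '' {k : ι → ℕ | ∑ i, k i = ∑ i, w i / a i} := by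
  ext v
  simp only [Set.mem_ofPred_eq, Set.mem_image, sum_mul_cofactor_eq_iff ha hcop]
  constructor
  · rintro ⟨hmod, hsum⟩
    exact ⟨fun i => v i / a i, hsum, funext fun i => by rw [← hmod i, Nat.mod_add_div]⟩
  · rintro ⟨k, hk, rfl⟩
    have hdiv (i : ι) : (w i % a i + a i * k i) / a i = k i := by
      rw [Nat.add_mul_div_left _ _ (ha i), Nat.div_eq_of_lt (Nat.mod_lt _ (ha i)), zero_add]
    simp [hdiv, hk]

theorem ncard_factorizations (ha : ∀ i, 0 < a i)
    (hcop : Pairwise fun i j => Nat.Coprime (a i) (a j)) (w : ι → ℕ) :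
    {v : ι → ℕ | ∑ i, v i * cofactor a i = ∑ i, w i * cofactor a i}.ncard =
      (Fintype.card ι + ∑ i, w i / a i - 1).choose (∑ i, w i / a i) := by
  have hinj : Function.Injective fun (k : ι → ℕ) i => w i % a i + a i * k i :=
    fun k k' h => funext fun i =>
      Nat.eq_of_mul_eq_mul_left (ha i) (Nat.add_left_cancel (congrFun h i))
  rw [factorizations_eq_image ha hcop, Set.ncard_image_of_injective _ hinj,
    ← Nat.card_coe_set_eq]
  exact Nat.card_fun_sum_eq_choose ι _

end Cofactor

theorem stmt_16_general (n : ℕ) (hn : 0 < n) (a : Fin n → ℕ)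
    (h2 : ∀ i, 2 ≤ a i)
    (hcop : ∀ i j, i ≠ j → Nat.Coprime (a i) (a j))
    (q : Fin n → ℕ) (hq : ∀ i, q i = (∏ j, a j) / a i)
    (x : ℕ) (xf : Fin n → ℕ) (hxf : ∑ i, xf i * q i = x) :
    {v : Fin n → ℕ | ∑ i, v i * q i = x}.ncard =
      Nat.choose (n + (∑ i, xf i / a i) - 1) (n - 1) := by
  have ha (i : Fin n) : 0 < a i := by linarith [h2 i]
  obtain rfl : q = cofactor a := funext fun i => (hq i).trans (cofactor_eq_prod_div (ha i)).symm
  subst hxf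
  rw [ncard_factorizations ha hcop, Fintype.card_fin]
  exact Nat.choose_symm_of_eq_add (by omega)

theorem stmt_16 (n : ℕ) (hn : 0 < n) (a : Fin n → ℕ)
    (h2 : ∀ i, 2 ≤ a i) (hmono : StrictMono a)
    (hcop : ∀ i j, i ≠ j → Nat.Coprime (a i) (a j))
    (q : Fin n → ℕ) (hq : ∀ i, q i = (∏ j, a j) / a i)
    (x : ℕ) (xf : Fin n → ℕ) (hxf : ∑ i, xf i * q i = x) :
    {v : Fin n → ℕ | ∑ i, v i * q i = x}.ncard =
      Nat.choose (n + (∑ i, xf i / a i) - 1) (n - 1) :=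
  stmt_16_general n hn a h2 hcop q hq x xf hxf
end

section
/- Let a and x be positive integers with x ≤ a − 1, let S = ⟨a, a+1, ..., a+x⟩ be the numerical semigroup generated by the interval {a, a+1, ..., a+x}, and write n = ⌈(a−1)/x⌉. Then (1) the Frobenius number of S is F(S) = (n−1)a + (a−1), and (2) the genus of S is g(S) = na − (n(n−1)/2)x − n. -/
open Finset Function

lemma lt_add_sub_one_div_iff {x : ℕ} (hx : 0 < x) (b k : ℕ) :
    k < (b + x - 1) / x ↔ k * x < b := by
  rw [← Nat.add_one_le_iff, Nat.le_div_iff_mul_le hx]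
  grind

lemma sum_range_sub_mul (n : ℕ) (c d : ℚ) :
    ∑ k ∈ range n, (c - k * d) = n * c - n * (n - 1) / 2 * d := by
  induction n with
  | zero => simp
  | succ n ih => rw [sum_range_succ, ih]; push_cast; ring

def intervalSemigroup (a x : ℕ) : Set ℕ :=
  {m | ∃ cc : Fin (x + 1) → ℕ, ∑ i, cc i * (a + (i : ℕ)) = m}

namespace intervalSemigroup

variable {a x m : ℕ}

lemma sum_mem_Icc (cc : Fin (x + 1) → ℕ) :
    ∑ i, cc i * (a + (i : ℕ)) ∈ Set.Icc ((∑ i, cc i) * a) ((∑ i, cc i) * (a + x)) := by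
  rw [Finset.sum_mul, Finset.sum_mul]
  exact ⟨sum_le_sum fun i _ => Nat.mul_le_mul_left _ (Nat.le_add_right _ _),
    sum_le_sum fun i _ => Nat.mul_le_mul_left _ (by omega)⟩

/-- A sum of `k + 1` generators is one generator `a + i` plus a sum of `k` of them; take `i` as
large as possible. -/
lemma exists_sum_eq_of_mem_Icc (k : ℕ) (hm : m ∈ Set.Icc (k * a) (k * (a + x))) :
    ∃ cc : Fin (x + 1) → ℕ, ∑ i, cc i * (a + (i : ℕ)) = m := by
  induction k generalizing m with
  | zero => exact ⟨0, by simp_all⟩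
  | succ k ih =>
    obtain ⟨hlo, hhi⟩ := hm
    let i : Fin (x + 1) := ⟨min x (m - (k + 1) * a), by omega⟩
    obtain ⟨cc, hcc⟩ := ih (m := m - (a + i)) ⟨by simp only [i]; grind, by simp only [i]; grind⟩
    refine ⟨cc + Pi.single i 1, ?_⟩
    have hi : a + (i : ℕ) ≤ m := by simp only [i]; grind
    simp only [Pi.add_apply, add_mul, sum_add_distrib, hcc, Pi.single_apply, ite_mul, one_mul,
      zero_mul, sum_ite_eq', mem_univ, if_true]
    omega

lemma mem_iff : m ∈ intervalSemigroup a x ↔ ∃ k, m ∈ Set.Icc (k * a) (k * (a + x)) :=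
  ⟨fun ⟨cc, hcc⟩ => ⟨∑ i, cc i, hcc ▸ sum_mem_Icc cc⟩,
    fun ⟨k, hk⟩ => exists_sum_eq_of_mem_Icc k hk⟩

def gapBlock (a x k : ℕ) : Finset ℕ := Ioo (k * (a + x)) ((k + 1) * a)

lemma notMem_iff (ha : 0 < a) :
    m ∉ intervalSemigroup a x ↔ ∃ k, m ∈ gapBlock a x k := by
  simp only [mem_iff, gapBlock, mem_Ioo]
  constructor
  · intro h
    have hlo := Nat.div_mul_le_self m a
    have hhi := Nat.lt_div_mul_add (a := m) ha
    refine ⟨m / a, ?_, by linarith⟩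
    by_contra! hle
    exact h ⟨m / a, hlo, hle⟩
  · rintro ⟨k, hlo, hhi⟩ ⟨j, hjlo, hjhi⟩
    have hjk : j ≤ k := by
      by_contra! hkj
      nlinarith
    nlinarith

lemma notMem_iff_exists_lt (ha : 0 < a) (hx : 0 < x) :
    m ∉ intervalSemigroup a x ↔ ∃ k < (a - 1 + x - 1) / x, m ∈ gapBlock a x k := by
  rw [notMem_iff ha]
  refine exists_congr fun k => ⟨fun hk => ⟨?_, hk⟩, fun hk => hk.2⟩
  simp only [gapBlock, mem_Ioo, Nat.mul_add, Nat.add_mul, one_mul] at hk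
  rw [lt_add_sub_one_div_iff hx]
  omega

lemma compl_eq (ha : 0 < a) (hx : 0 < x) :
    (intervalSemigroup a x)ᶜ = ↑((range ((a - 1 + x - 1) / x)).biUnion (gapBlock a x)) := by
  ext m
  simp [notMem_iff_exists_lt ha hx]

lemma pairwise_disjoint_gapBlock : Pairwise (Disjoint on (gapBlock a x)) := by
  refine (pairwise_disjoint_on _).mpr fun j k hjk => disjoint_left.mpr fun m hmj hmk => ?_
  simp only [gapBlock, mem_Ioo] at hmj hmk
  nlinarith

lemma card_gapBlock (k : ℕ) : #(gapBlock a x k) = a - 1 - k * x := by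
  rw [gapBlock, Nat.card_Ioo, Nat.add_mul, Nat.mul_add, one_mul]
  omega

lemma isGreatest_compl (hx : 0 < x) (hxa : x ≤ a - 1) :
    IsGreatest (intervalSemigroup a x)ᶜ (((a - 1 + x - 1) / x - 1) * a + (a - 1)) := by
  set n := (a - 1 + x - 1) / x
  have hn : 0 < n := (lt_add_sub_one_div_iff hx _ 0).mpr (by omega)
  have hlast := (lt_add_sub_one_div_iff hx (a - 1) (n - 1)).mp (by omega)
  have hsucc : (n - 1) * a + a = n * a := by rw [← Nat.add_one_mul, Nat.sub_one_add_one hn.ne']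
  have ha : 0 < a := by omega
  refine ⟨(notMem_iff_exists_lt ha hx).mpr ⟨n - 1, by omega, mem_Ioo.mpr ⟨?_, ?_⟩⟩,
    fun m hm => ?_⟩
  · rw [Nat.mul_add]
    omega
  · rw [Nat.sub_one_add_one hn.ne']
    omega
  · obtain ⟨k, hk, hm⟩ := (notMem_iff_exists_lt ha hx).mp hm
    have : (k + 1) * a ≤ n * a := Nat.mul_le_mul_right a hk
    have := (mem_Ioo.mp hm).2
    omega

lemma ncard_compl (ha : 0 < a) (hx : 0 < x) :
    ((intervalSemigroup a x)ᶜ.ncard : ℚ) =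
      ∑ k ∈ range ((a - 1 + x - 1) / x), ((a : ℚ) - 1 - k * x) := by
  rw [compl_eq ha hx, Set.ncard_coe_finset,
    card_biUnion (pairwise_disjoint_gapBlock.set_pairwise _), Nat.cast_sum]
  refine sum_congr rfl fun k hk => ?_
  have hkx := (lt_add_sub_one_div_iff hx (a - 1) k).mp (mem_range.mp hk)
  rw [card_gapBlock, Nat.cast_sub hkx.le, Nat.cast_sub (by omega : 1 ≤ a)]
  push_cast
  ring

end intervalSemigroup

theorem stmt_18_general (a x : ℕ) (hx : 0 < x) (hxa : x ≤ a - 1)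
    (S : Set ℕ)
    (hS : S = {m | ∃ cc : Fin (x + 1) → ℕ, ∑ i, cc i * (a + (i : ℕ)) = m})
    (n : ℕ) (hn : n = (a - 1 + x - 1) / x) :
    frob S = (n - 1) * a + (a - 1) ∧
      (genus S : ℚ) = (n : ℚ) * a - (n : ℚ) * ((n : ℚ) - 1) / 2 * x - n := by
  obtain rfl : S = intervalSemigroup a x := hS
  subst hn
  refine ⟨(intervalSemigroup.isGreatest_compl hx hxa).csSup_eq, ?_⟩
  rw [genus, intervalSemigroup.ncard_compl (by omega) hx, sum_range_sub_mul]
  ring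

theorem stmt_18 (a x : ℕ) (ha : 0 < a) (hx : 0 < x) (hxa : x ≤ a - 1)
    (S : Set ℕ)
    (hS : S = {m | ∃ cc : Fin (x + 1) → ℕ, ∑ i, cc i * (a + (i : ℕ)) = m})
    (n : ℕ) (hn : n = (a - 1 + x - 1) / x) :
    frob S = (n - 1) * a + (a - 1) ∧
      (genus S : ℚ) = (n : ℚ) * a - (n : ℚ) * ((n : ℚ) - 1) / 2 * x - n :=
  stmt_18_general a x hx hxa S hS n hn
end
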